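/- arXiv:1504.05324 — 13 statements merged into one kernel-verified Lean document; each statement's English description precedes it below -/
import Mathlib

section
/- Let d ≥ 1 and let f be a step-isometry of ℓ∞^d (the space ℝ^d with norm ‖(x_1, …, x_d)‖ = max_i |x_i|, with standard basis e_1, …, e_d). Then there exist a permutation σ of {1, …, d}, signs ε = (ε_1, …, ε_d) ∈ {−1, +1}^d, and, for each i, a strictly increasing bijection g_i : [0,1) → [0,1), such that for all λ_1, …, λ_d ∈ ℝ: f(∑_{i=1}^d λ_i e_i) − f(0) = ∑_{i=1}^d (g_i(λ_i − ⌊λ_i⌋) + ⌊λ_i⌋) ε_i e_{σ(i)}. -/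
/-- A step-isometry of a normed space: a bijection preserving the integer part of
all distances. -/
def IsStepIsometry {V : Type*} [NormedAddCommGroup V] (f : V → V) : Prop :=
  Function.Bijective f ∧ ∀ x y : V, ⌊‖x - y‖⌋ = ⌊‖f x - f y‖⌋

/-!
A surjective map preserving integer parts of distances preserves every integer distance, since
`‖a - b‖ ∈ ℤ` is characterised by the triangle inequality for integer parts of distances through
`b`. In `ℓ∞` an isometric copy of `ℤ` moves one coordinate by exactly `±1` per step, so on each
translate `x + ℤ^d` the map `f` is a signed permutation of the coordinates followed by a
translation; as `f (x + p)` stays within `‖x‖ + 1` of `f p`, the signed permutation does not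
depend on `x`. Comparing `x` with a far point `z + M e_j` gives
`⌊ε_j (f z - f x)_{σ j}⌋ = ⌊z_j - x_j⌋`, so the `σ j`-th coordinate of `f` is a function `g_j` of
`x_j` alone with `⌊g_j s - g_j t⌋ = ⌊s - t⌋`; such a function is strictly increasing and commutes
with integer translations.
-/

open Function Set

lemma eq_intCast_of_floor_eq_of_floor_neg_eq {a : ℝ} {n : ℤ} (h₁ : ⌊a⌋ = n) (h₂ : ⌊-a⌋ = -n) :
    a = n := by
  have hc : ⌈a⌉ = n := by rw [Int.floor_neg] at h₂; omega
  exact le_antisymm (hc ▸ Int.le_ceil a) (h₁ ▸ Int.floor_le a)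

lemma sub_eq_intCast_of_floor_sub_eq {α : Type*} {φ u : α → ℝ}
    (h : ∀ a b, ⌊φ a - φ b⌋ = ⌊u a - u b⌋) {a b : α} {n : ℤ} (hn : u a - u b = n) :
    φ a - φ b = n :=
  eq_intCast_of_floor_eq_of_floor_neg_eq (by rw [h, hn, Int.floor_intCast])
    (by rw [neg_sub, h, ← neg_sub, hn, ← Int.cast_neg, Int.floor_intCast])

lemma eq_zero_of_forall_abs_mul_natCast_le {c C : ℝ} (h : ∀ N : ℕ, |c * N| ≤ C) : c = 0 := by
  by_contra hc
  obtain ⟨N, hN⟩ := exists_nat_gt (C / |c|)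
  have := h N
  rw [abs_mul, Nat.abs_cast] at this
  rw [div_lt_iff₀ (abs_pos.2 hc)] at hN
  linarith

lemma eq_mul_of_abs_sub_le_of_abs_add_le {a t m N : ℝ} (ht : t = 1 ∨ t = -1)
    (h₁ : |a - t * N| ≤ N - m) (h₂ : |a + t * N| ≤ N + m) : a = t * m := by
  rw [abs_le] at h₁ h₂
  rcases ht with rfl | rfl <;> linarith

section FloorDiff

variable {φ : ℝ → ℝ} (hφ : ∀ s t, ⌊φ s - φ t⌋ = ⌊s - t⌋)
include hφ

lemma strictMono_of_floor_sub_eq : StrictMono φ := by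
  intro s t hst
  have h : ⌊φ s - φ t⌋ < 0 := by rw [hφ, Int.floor_lt]; push_cast; linarith
  have := Int.lt_floor_add_one (φ s - φ t)
  have : (⌊φ s - φ t⌋ : ℝ) + 1 ≤ 0 := by exact_mod_cast h
  linarith

lemma apply_sub_floor_add_floor (s : ℝ) : φ (s - ⌊s⌋) + ⌊s⌋ = φ s := by
  have := sub_eq_intCast_of_floor_sub_eq (u := id) (fun a b => hφ a b) (a := s) (b := s - ⌊s⌋)
    (n := ⌊s⌋) (by simp)
  linarith

lemma bijOn_Ico_of_floor_sub_eq (hφ0 : φ 0 = 0) (hsurj : Surjective φ) :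
    BijOn φ (Ico 0 1) (Ico 0 1) := by
  have hfloor : ∀ s, ⌊φ s⌋ = ⌊s⌋ := fun s => by simpa [hφ0] using hφ s 0
  refine ⟨fun s hs => ?_, (strictMono_of_floor_sub_eq hφ).injective.injOn, fun c hc => ?_⟩
  · rw [← Int.floor_eq_zero_iff, hfloor, Int.floor_eq_zero_iff.2 hs]
  · obtain ⟨s, rfl⟩ := hsurj c
    exact ⟨s, Int.floor_eq_zero_iff.1 (hfloor s ▸ Int.floor_eq_zero_iff.2 hc), rfl⟩

end FloorDiff

def PreservesIntDist {V W : Type*} [NormedAddCommGroup V] [NormedAddCommGroup W] (T : V → W) :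
    Prop :=
  ∀ x y, (∃ n : ℤ, ‖x - y‖ = n) → ‖T x - T y‖ = ‖x - y‖

section NormedSpace

variable {V : Type*} [NormedAddCommGroup V] {f : V → V}

lemma IsStepIsometry.norm_sub_lt (hf : IsStepIsometry f) (x y : V) : ‖f x - f y‖ < ‖x - y‖ + 1 := by
  have := Int.lt_floor_add_one ‖f x - f y‖
  rw [← hf.2] at this
  linarith [Int.floor_le ‖x - y‖]

lemma exists_intCast_eq_norm_sub_iff [NormedSpace ℝ V] (a b : V) :
    (∃ n : ℤ, ‖a - b‖ = n) ↔ ∀ w, ⌊‖a - w‖⌋ ≤ ⌊‖a - b‖⌋ + ⌊‖b - w‖⌋ := by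
  constructor
  · rintro ⟨n, hn⟩ w
    have htri := norm_sub_le_norm_sub_add_norm_sub a b w
    have : ‖a - w‖ < ((n + ⌊‖b - w‖⌋ + 1 : ℤ) : ℝ) := by
      push_cast; linarith [Int.lt_floor_add_one ‖b - w‖]
    rw [hn, Int.floor_intCast]
    have := Int.floor_lt.2 this
    omega
  · intro h
    by_contra hr
    set r := ‖a - b‖
    have hr0 : 0 < r :=
      (norm_nonneg _).lt_of_ne fun h0 => hr ⟨0, by rw [Int.cast_zero]; exact h0.symm⟩
    have hfr : 0 < Int.fract r :=
      (Int.fract_nonneg r).lt_of_ne fun h0 => hr ⟨⌊r⌋, by linarith [Int.fract_add_floor r]⟩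
    -- `w` lies on the line through `a` and `b`, beyond `b`, at distance `⌊r⌋ + 1` from `a`.
    set c : ℝ := (⌊r⌋ + 1) / r
    have hc : c * r = ⌊r⌋ + 1 := div_mul_cancel₀ _ hr0.ne'
    have hc1 : 0 ≤ c - 1 := by
      rw [sub_nonneg, le_div_iff₀ hr0]; linarith [Int.lt_floor_add_one r]
    have haw : ‖a - (b - (c - 1) • (a - b))‖ = ⌊r⌋ + 1 := by
      rw [show a - (b - (c - 1) • (a - b)) = c • (a - b) by module, norm_smul,
        Real.norm_of_nonneg (by linarith), hc]
    have hbw : ‖b - (b - (c - 1) • (a - b))‖ = 1 - Int.fract r := by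
      rw [sub_sub_cancel, norm_smul, Real.norm_of_nonneg hc1, sub_mul, hc, ← Int.self_sub_floor]
      ring
    have h01 : ⌊1 - Int.fract r⌋ = 0 :=
      Int.floor_eq_zero_iff.2 ⟨by linarith [Int.fract_lt_one r], by linarith⟩
    have := h (b - (c - 1) • (a - b))
    rw [haw, hbw, h01, show ((⌊r⌋ : ℝ) + 1) = ((⌊r⌋ + 1 : ℤ) : ℝ) by push_cast; ring,
      Int.floor_intCast] at this
    omega

lemma IsStepIsometry.preservesIntDist [NormedSpace ℝ V] (hf : IsStepIsometry f) :
    PreservesIntDist f := by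
  intro x y hxy
  obtain ⟨m, hm⟩ : ∃ m : ℤ, ‖f x - f y‖ = m := by
    refine (exists_intCast_eq_norm_sub_iff _ _).2 fun w' => ?_
    obtain ⟨w, rfl⟩ := hf.1.2 w'
    rw [← hf.2, ← hf.2, ← hf.2]
    exact (exists_intCast_eq_norm_sub_iff _ _).1 hxy w
  obtain ⟨n, hn⟩ := hxy
  have := hf.2 x y
  rw [hm, hn, Int.floor_intCast, Int.floor_intCast] at this
  rw [hm, hn, this]

lemma PreservesIntDist.translate {T : V → V} (hT : PreservesIntDist T) (x : V) :
    PreservesIntDist fun y => T (x + y) - T x := by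
  intro y y' h
  rw [sub_sub_sub_cancel_right, hT _ _ (by rwa [add_sub_add_left_eq_sub]), add_sub_add_left_eq_sub]

end NormedSpace

section SupNorm

variable {ι : Type*} [Fintype ι]

lemma abs_apply_le_norm (v : ι → ℝ) (k : ι) : |v k| ≤ ‖v‖ :=
  (Real.norm_eq_abs _).symm.trans_le (norm_le_pi_norm v k)

lemma norm_single_mul_add [DecidableEq ι] {t M : ℝ} (ht : t = 1 ∨ t = -1) {v : ι → ℝ}
    (hM : 2 * ‖v‖ ≤ M) (k : ι) : ‖Pi.single k (t * M) + v‖ = M + t * v k := by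
  have hvk := abs_le.1 (abs_apply_le_norm v k)
  have hk : |t * M + v k| = M + t * v k := by
    rcases ht with rfl | rfl
    · rw [abs_of_nonneg] <;> linarith
    · rw [abs_of_nonpos] <;> linarith
  apply le_antisymm
  · refine (pi_norm_le_iff_of_nonneg (hk ▸ abs_nonneg _)).2 fun i => ?_
    rw [Real.norm_eq_abs]
    by_cases hi : i = k
    · subst hi
      simp [hk]
    · simp only [Pi.add_apply, Pi.single_eq_of_ne hi, zero_add]
      have := abs_apply_le_norm v i
      rcases ht with rfl | rfl <;> linarith
  · have := abs_apply_le_norm (Pi.single k (t * M) + v) k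
    rwa [Pi.add_apply, Pi.single_eq_same, hk] at this

section IsometricLine

variable {P : ℤ → ι → ℝ} (hP : ∀ M N : ℤ, ‖P M - P N‖ = |(M : ℝ) - N|)
include hP

lemma exists_coord_eq_mul_at_ends [Nonempty ι] (hP0 : P 0 = 0) (n : ℕ) :
    ∃ k t, (t = 1 ∨ t = -1) ∧ P n k = t * n ∧ P (-n) k = -(t * n) := by
  obtain ⟨k, hk⟩ := (IsGreatest.pi_norm (P n - P (-n))).1
  have h : |P n k - P (-n) k| = 2 * n := by
    rw [← Pi.sub_apply, ← Real.norm_eq_abs, show ‖(P n - P (-n)) k‖ = _ from hk, hP]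
    push_cast
    rw [sub_neg_eq_add, ← two_mul, abs_of_nonneg (by positivity)]
  have h₁ := abs_le.1 (hP n 0 ▸ abs_apply_le_norm (P n - P 0) k)
  have h₂ := abs_le.1 (hP (-n) 0 ▸ abs_apply_le_norm (P (-n) - P 0) k)
  simp only [hP0, Pi.sub_apply, Pi.zero_apply, sub_zero, Int.cast_zero, Int.cast_neg,
    Int.cast_natCast, Nat.abs_cast, abs_neg] at h₁ h₂
  rcases abs_cases (P n k - P (-n) k) with ⟨hs, -⟩ | ⟨hs, -⟩
  · exact ⟨k, 1, Or.inl rfl, by linarith, by linarith⟩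
  · exact ⟨k, -1, Or.inr rfl, by linarith, by linarith⟩

lemma apply_eq_mul_of_ends {n : ℕ} {k : ι} {t : ℝ} (ht : t = 1 ∨ t = -1) (hn : P n k = t * n)
    (hn' : P (-n) k = -(t * n)) {M : ℤ} (hM : M.natAbs ≤ n) : P M k = t * M := by
  have hM₁ : -(n : ℝ) ≤ M := by norm_cast; omega
  have hM₂ : (M : ℝ) ≤ n := by norm_cast; omega
  refine eq_mul_of_abs_sub_le_of_abs_add_le ht (N := n) ?_ ?_
  · rw [← hn]
    refine (hP M n ▸ abs_apply_le_norm (P M - P n) k).trans ?_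
    rw [Int.cast_natCast, abs_of_nonpos] <;> linarith
  · rw [← neg_neg (t * n), ← hn', ← sub_eq_add_neg]
    refine (hP M (-n) ▸ abs_apply_le_norm (P M - P (-n)) k).trans ?_
    push_cast
    rw [abs_of_nonneg] <;> linarith

/-- Pigeonhole over the coordinates: one coordinate has pinned ends for arbitrarily long
segments `[-n, n]`. -/
theorem exists_apply_eq_mul_of_norm_sub_eq [Nonempty ι] (hP0 : P 0 = 0) :
    ∃ k t, (t = 1 ∨ t = -1) ∧ ∀ N : ℤ, P N k = t * N := by
  choose k t ht hends using exists_coord_eq_mul_at_ends hP hP0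
  obtain ⟨k₀, hk₀⟩ := Finite.exists_infinite_fiber k
  have hsign : ∀ M : ℤ, ∃ t, (t = 1 ∨ t = -1) ∧ P 1 k₀ = t ∧ P M k₀ = t * M := by
    intro M
    obtain ⟨n, hn, hMn⟩ := (Set.infinite_coe_iff.1 hk₀).exists_gt (M.natAbs + 1)
    have hb := fun M => apply_eq_mul_of_ends hP (ht n) (hends n).1 (hends n).2 (M := M)
    rw [show k n = k₀ from hn] at hb
    exact ⟨t n, ht n, by simpa using hb 1 (by omega), hb M (by omega)⟩
  refine ⟨k₀, P 1 k₀, ?_, fun M => ?_⟩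
  · obtain ⟨t, ht, h1, -⟩ := hsign 0
    exact h1 ▸ ht
  · obtain ⟨t, -, h1, hM⟩ := hsign M
    rwa [h1]

end IsometricLine

variable [DecidableEq ι]

lemma PreservesIntDist.apply_eq_mul_of_apply_single {T : (ι → ℝ) → ι → ℝ}
    (hT : PreservesIntDist T) {σ : ι → ι} {ε : ι → ℝ} (hε : ∀ j, ε j = 1 ∨ ε j = -1)
    (hσ : ∀ j (N : ℤ), T (Pi.single j (N : ℝ)) (σ j) = ε j * N) (m : ι → ℤ) (j : ι) :
    T (Int.cast ∘ m) (σ j) = ε j * m j := by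
  -- compare `m` with the far lattice points `±N • e j`
  set x : ι → ℝ := Int.cast ∘ m
  obtain ⟨N, hN⟩ := exists_nat_ge (2 * ‖-x‖)
  have bound : ∀ t : ℤ, (t = 1 ∨ t = -1) → |T x (σ j) - ε j * (t * N)| ≤ N - t * m j := by
    intro t ht
    have hd : ‖x - Pi.single j ((t * N : ℤ) : ℝ)‖ = N - t * m j := by
      rw [norm_sub_rev, sub_eq_add_neg, Int.cast_mul, Int.cast_natCast,
        norm_single_mul_add (by rcases ht with rfl | rfl <;> simp) hN]
      simp [x, sub_eq_add_neg]
    calc |T x (σ j) - ε j * (t * N)|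
        = |(T x - T (Pi.single j ((t * N : ℤ) : ℝ))) (σ j)| := by
          rw [Pi.sub_apply, hσ]; push_cast; rfl
      _ ≤ ‖T x - T (Pi.single j ((t * N : ℤ) : ℝ))‖ := abs_apply_le_norm _ _
      _ = N - t * m j := by rw [hT _ _ ⟨N - t * m j, by rw [hd]; push_cast; rfl⟩, hd]
  exact eq_mul_of_abs_sub_le_of_abs_add_le (hε j) (by simpa using bound 1 (Or.inl rfl))
    (by simpa using bound (-1) (Or.inr rfl))

theorem PreservesIntDist.exists_perm_signs {T : (ι → ℝ) → ι → ℝ} (hT : PreservesIntDist T)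
    (hT0 : T 0 = 0) :
    ∃ (σ : Equiv.Perm ι) (ε : ι → ℝ), (∀ j, ε j = 1 ∨ ε j = -1) ∧
      ∀ (m : ι → ℤ) j, T (Int.cast ∘ m) (σ j) = ε j * m j := by
  have hline : ∀ j, ∃ k t, (t = 1 ∨ t = -1) ∧ ∀ N : ℤ, T (Pi.single j (N : ℝ)) k = t * N := by
    intro j
    have : Nonempty ι := ⟨j⟩
    refine exists_apply_eq_mul_of_norm_sub_eq (P := fun N => T (Pi.single j (N : ℝ)))
      (fun M N => ?_) (by simp [hT0])
    have hd : ‖(Pi.single j (M : ℝ) : ι → ℝ) - Pi.single j (N : ℝ)‖ = |(M : ℝ) - N| := by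
      rw [← Pi.single_sub, Pi.norm_single, Real.norm_eq_abs]
    rw [hT _ _ ⟨|M - N|, by rw [hd]; push_cast; rfl⟩, hd]
  choose σ ε hε hσ using hline
  have hform := hT.apply_eq_mul_of_apply_single hε hσ
  have hinj : Injective σ := by
    intro i j hij
    by_contra hne
    have h := hform (Pi.single i 1) j
    rw [← hij, hform] at h
    have hεi : ε i = 0 := by simpa [Ne.symm hne] using h
    rcases hε i with h' | h' <;> simp [h'] at hεi
  exact ⟨Equiv.ofBijective σ hinj.bijective_of_finite, ε, hε, hform⟩

/-- Along the lattice line `N • e j`, a mismatch of `σ` or `ε` makes `A - B` grow linearly. -/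
theorem perm_signs_unique_of_norm_sub_le {A B : (ι → ℝ) → ι → ℝ} {σ σ' : Equiv.Perm ι}
    {ε ε' : ι → ℝ}
    (hε' : ∀ j, ε' j = 1 ∨ ε' j = -1)
    (hA : ∀ (m : ι → ℤ) j, A (Int.cast ∘ m) (σ j) = ε j * m j)
    (hB : ∀ (m : ι → ℤ) j, B (Int.cast ∘ m) (σ' j) = ε' j * m j) {C : ℝ}
    (hAB : ∀ m : ι → ℤ, ‖A (Int.cast ∘ m) - B (Int.cast ∘ m)‖ ≤ C) : σ = σ' ∧ ε = ε' := by
  have key : ∀ j, σ j = σ' j ∧ ε j = ε' j := by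
    intro j
    set i := σ.symm (σ' j) with hi
    have hN : ∀ N : ℕ, |ε i * (Pi.single j (N : ℤ) : ι → ℤ) i - ε' j * N| ≤ C := fun N => by
      have := (abs_apply_le_norm _ (σ' j)).trans (hAB (Pi.single j N))
      rwa [Pi.sub_apply, hB, ← σ.apply_symm_apply (σ' j), hA, ← hi, Pi.single_eq_same,
        Int.cast_natCast] at this
    by_cases hij : i = j
    · refine ⟨((Equiv.symm_apply_eq σ).1 hij).symm, sub_eq_zero.1 ?_⟩
      exact eq_zero_of_forall_abs_mul_natCast_le fun N => by simpa [hij, sub_mul] using hN N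
    · have := eq_zero_of_forall_abs_mul_natCast_le fun N => by
        simpa [Pi.single_eq_of_ne hij] using hN N
      rcases hε' j with h | h <;> simp [h] at this
  exact ⟨Equiv.ext fun j => (key j).1, funext fun j => (key j).2⟩

end SupNorm

section StepIsometry

variable {ι : Type*} [Fintype ι] [DecidableEq ι] {f : (ι → ℝ) → ι → ℝ}

theorem IsStepIsometry.exists_perm_signs_apply_add (hf : IsStepIsometry f) :
    ∃ (σ : Equiv.Perm ι) (ε : ι → ℝ), (∀ j, ε j = 1 ∨ ε j = -1) ∧
      ∀ x (m : ι → ℤ) j, f (x + Int.cast ∘ m) (σ j) = f x (σ j) + ε j * m j := by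
  have hT := hf.preservesIntDist
  obtain ⟨σ, ε, hε, h0⟩ := (hT.translate 0).exists_perm_signs (by simp)
  refine ⟨σ, ε, hε, fun x m j => ?_⟩
  obtain ⟨σx, εx, hεx, hx⟩ := (hT.translate x).exists_perm_signs (by simp)
  -- `f` moves `x + p` by less than `‖x‖ + 1` away from `f p`
  obtain ⟨rfl, rfl⟩ := perm_signs_unique_of_norm_sub_le (A := fun y => f (0 + y) - f 0)
    (B := fun y => f (x + y) - f x) hεx h0 hx (C := 2 * (‖x‖ + 1)) fun p => by
    calc ‖(f (0 + Int.cast ∘ p) - f 0) - (f (x + Int.cast ∘ p) - f x)‖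
        = ‖(f x - f 0) - (f (x + Int.cast ∘ p) - f (Int.cast ∘ p))‖ := by
          rw [zero_add]; congr 1; abel
      _ ≤ ‖f x - f 0‖ + ‖f (x + Int.cast ∘ p) - f (Int.cast ∘ p)‖ := norm_sub_le _ _
      _ ≤ 2 * (‖x‖ + 1) := by
        have h₁ := hf.norm_sub_lt x 0
        have h₂ := hf.norm_sub_lt (x + Int.cast ∘ p) (Int.cast ∘ p)
        rw [sub_zero] at h₁
        rw [add_sub_cancel_right] at h₂
        linarith
  have := hx m j
  rw [Pi.sub_apply] at this
  linarith

theorem IsStepIsometry.floor_mul_apply_sub_eq (hf : IsStepIsometry f) {σ : Equiv.Perm ι}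
    {ε : ι → ℝ} (hε : ∀ j, ε j = 1 ∨ ε j = -1)
    (hshift : ∀ x (m : ι → ℤ) j, f (x + Int.cast ∘ m) (σ j) = f x (σ j) + ε j * m j)
    (z x : ι → ℝ) (j : ι) : ⌊ε j * f z (σ j) - ε j * f x (σ j)⌋ = ⌊z j - x j⌋ := by
  obtain ⟨M, hM⟩ := exists_nat_ge (2 * (‖z - x‖ + 1))
  -- compare `x` with the far point `w = z + M • e j`, where the `j`-th coordinate dominates
  set w := z + Int.cast ∘ (Pi.single j (M : ℤ))
  have hw : w - x = Pi.single j (1 * (M : ℝ)) + (z - x) := by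
    ext i
    by_cases hij : i = j
    · subst hij
      simp only [w, Pi.sub_apply, Pi.add_apply, comp_apply, Pi.single_eq_same, Int.cast_natCast,
        one_mul]
      ring
    · simp [w, Pi.single_eq_of_ne hij]
  have hfw : f w - f x = Pi.single (σ j) (ε j * M) + (f z - f x) := by
    ext k
    obtain ⟨i, rfl⟩ := σ.surjective k
    rw [Pi.sub_apply, hshift, Pi.add_apply, Pi.sub_apply]
    by_cases hij : i = j
    · subst hij
      simp only [Pi.single_eq_same, Int.cast_natCast]
      ring
    · simp [Pi.single_eq_of_ne hij, Pi.single_eq_of_ne (σ.injective.ne hij)]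
  have h := hf.2 w x
  rw [hw, hfw, norm_single_mul_add (Or.inl rfl) (by linarith [norm_nonneg (z - x)]),
    norm_single_mul_add (hε j) (by linarith [hf.norm_sub_lt z x]), Int.floor_natCast_add,
    Int.floor_natCast_add] at h
  simp only [Pi.sub_apply, one_mul, add_right_inj] at h
  rw [← mul_sub, h]

theorem IsStepIsometry.exists_perm_signs_floor_sub (hf : IsStepIsometry f) :
    ∃ (σ : Equiv.Perm ι) (ε : ι → ℝ) (g : ι → ℝ → ℝ), (∀ j, ε j = 1 ∨ ε j = -1) ∧
      (∀ j s t, ⌊g j s - g j t⌋ = ⌊s - t⌋) ∧ (∀ j, g j 0 = 0) ∧ (∀ j, Surjective (g j)) ∧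
      ∀ x j, f x (σ j) - f 0 (σ j) = g j (x j) * ε j := by
  obtain ⟨σ, ε, hε, hshift⟩ := hf.exists_perm_signs_apply_add
  have hfloor := hf.floor_mul_apply_sub_eq hε hshift
  have hε2 : ∀ j, ε j * ε j = 1 := fun j => mul_self_eq_one_iff.2 (hε j)
  have hdep : ∀ x j, ε j * f x (σ j) = ε j * f (Pi.single j (x j)) (σ j) := fun x j => by
    have := sub_eq_intCast_of_floor_sub_eq (fun a b => hfloor a b j) (a := x)
      (b := Pi.single j (x j)) (n := 0) (by simp)
    rwa [Int.cast_zero, sub_eq_zero] at this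
  refine ⟨σ, ε, fun j s => ε j * f (Pi.single j s) (σ j) - ε j * f 0 (σ j), hε,
    fun j s t => ?_, fun j => by simp, fun j c => ?_, fun x j => ?_⟩
  · simpa [sub_sub_sub_cancel_right] using hfloor (Pi.single j s) (Pi.single j t) j
  · obtain ⟨x, hx⟩ := hf.1.2 (f 0 + Pi.single (σ j) (ε j * c))
    refine ⟨x j, ?_⟩
    dsimp only
    rw [← hdep, hx, Pi.add_apply, Pi.single_eq_same, mul_add, ← mul_assoc, hε2, one_mul]
    ring
  · dsimp only
    rw [← hdep]
    linear_combination (f 0 (σ j) - f x (σ j)) * hε2 j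

end StepIsometry

theorem stepIsometry_linfty_form_general
    (d : ℕ)
    (f : (Fin d → ℝ) → (Fin d → ℝ))
    (hf : IsStepIsometry f) :
    ∃ (σ : Equiv.Perm (Fin d)) (ε : Fin d → ℝ) (g : Fin d → ℝ → ℝ),
      (∀ i, ε i = 1 ∨ ε i = -1) ∧
      (∀ i, Set.BijOn (g i) (Set.Ico (0 : ℝ) 1) (Set.Ico (0 : ℝ) 1)) ∧
      (∀ i, StrictMonoOn (g i) (Set.Ico (0 : ℝ) 1)) ∧
      ∀ lam : Fin d → ℝ,
        f lam - f 0 =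
          ∑ i, ((g i (lam i - ⌊lam i⌋) + ⌊lam i⌋) * ε i) •
            (Pi.single (σ i) (1 : ℝ) : Fin d → ℝ) := by
  obtain ⟨σ, ε, g, hε, hg, hg0, hgsurj, hfg⟩ := hf.exists_perm_signs_floor_sub
  refine ⟨σ, ε, g, hε, fun i => bijOn_Ico_of_floor_sub_eq (hg i) (hg0 i) (hgsurj i),
    fun i => (strictMono_of_floor_sub_eq (hg i)).strictMonoOn _, fun lam => ?_⟩
  simp_rw [apply_sub_floor_add_floor (hg _)]
  ext k
  obtain ⟨j, rfl⟩ := σ.surjective k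
  simp [Finset.sum_apply, Pi.single_apply, hfg]

/-- Every step-isometry `f` of `ℓ∞^d` (for `d ≥ 1`, here
`Fin d → ℝ` with the sup norm) has the form: there are a permutation `σ` of the
coordinates, signs `ε i ∈ {−1, +1}`, and strictly increasing bijections
`gᵢ : [0,1) → [0,1)` such that
`f (∑ λᵢ eᵢ) − f 0 = ∑ (gᵢ(λᵢ − ⌊λᵢ⌋) + ⌊λᵢ⌋) εᵢ e_{σ i}` for all `λ`. -/
theorem stepIsometry_linfty_form
    (d : ℕ) (hd : 1 ≤ d)
    (f : (Fin d → ℝ) → (Fin d → ℝ))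
    (hf : IsStepIsometry f) :
    ∃ (σ : Equiv.Perm (Fin d)) (ε : Fin d → ℝ) (g : Fin d → ℝ → ℝ),
      (∀ i, ε i = 1 ∨ ε i = -1) ∧
      (∀ i, Set.BijOn (g i) (Set.Ico (0 : ℝ) 1) (Set.Ico (0 : ℝ) 1)) ∧
      (∀ i, StrictMonoOn (g i) (Set.Ico (0 : ℝ) 1)) ∧
      ∀ lam : Fin d → ℝ,
        f lam - f 0 =
          ∑ i, ((g i (lam i - ⌊lam i⌋) + ⌊lam i⌋) * ε i) •
            (Pi.single (σ i) (1 : ℝ) : Fin d → ℝ) :=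
  stepIsometry_linfty_form_general d f hf
end

section
/- Let V be a finite-dimensional real normed space of dimension d ≥ 1, and let Λ be the additive subgroup of V generated by the extreme points of the closed unit ball B(0,1). Then for every v ∈ V there exists x ∈ Λ with ‖x − v‖ ≤ d/2. -/
/-!
By Krein–Milman the closed unit ball is the closed convex hull of its extreme points, so these
span `V` and therefore contain a basis `b` of `V`. Rounding the coordinates of `v` in `b` to the
nearest integers moves `v` by at most `∑ i, ‖b i‖ / 2 ≤ d / 2`.
-/

open Set

theorem Module.Basis.exists_mem_closure_range_norm_sub_le
    {V ι : Type*} [NormedAddCommGroup V] [NormedSpace ℝ V] [Fintype ι]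
    (b : Module.Basis ι ℝ V) (v : V) :
    ∃ x ∈ AddSubgroup.closure (range b), ‖x - v‖ ≤ (∑ i, ‖b i‖) / 2 := by
  set c := b.repr v
  refine ⟨∑ i, round (c i) • b i, ?_, ?_⟩
  · exact AddSubgroup.sum_mem _ fun i _ =>
      AddSubgroup.zsmul_mem _ (AddSubgroup.subset_closure (mem_range_self i)) _
  have hdiff : ∑ i, round (c i) • b i - v = ∑ i, ((round (c i) : ℝ) - c i) • b i := by
    conv_lhs => rw [← b.sum_repr v]
    simp only [← Finset.sum_sub_distrib, sub_smul, Int.cast_smul_eq_zsmul, c]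
  calc ‖∑ i, round (c i) • b i - v‖
      ≤ ∑ i, |(round (c i) : ℝ) - c i| * ‖b i‖ := by
        rw [hdiff]
        refine (norm_sum_le _ _).trans_eq (Finset.sum_congr rfl fun i _ => ?_)
        rw [_root_.norm_smul, Real.norm_eq_abs]
    _ ≤ ∑ i, 1 / 2 * ‖b i‖ := by
        gcongr with i
        rw [abs_sub_comm]
        exact abs_sub_round (c i)
    _ = (∑ i, ‖b i‖) / 2 := by rw [← Finset.mul_sum]; ring

theorem span_extremePoints_eq_top
    {V : Type*} [NormedAddCommGroup V] [NormedSpace ℝ V] [FiniteDimensional ℝ V]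
    {K : Set V} (hKcomp : IsCompact K) (hKconv : Convex ℝ K) (hK : (interior K).Nonempty) :
    Submodule.span ℝ (K.extremePoints ℝ) = ⊤ := by
  refine Submodule.eq_top_of_nonempty_interior' _ (hK.mono (interior_mono ?_))
  calc K = closure (convexHull ℝ (K.extremePoints ℝ)) :=
        (closure_convexHull_extremePoints hKcomp hKconv).symm
    _ ⊆ closure (Submodule.span ℝ (K.extremePoints ℝ)) :=
        closure_mono (convexHull_min Submodule.subset_span (Submodule.span ℝ _).convex)
    _ = Submodule.span ℝ (K.extremePoints ℝ) :=
        (Submodule.closed_of_finiteDimensional _).closure_eq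

theorem exists_latticePoint_near_general
    {V : Type*} [NormedAddCommGroup V] [NormedSpace ℝ V] [FiniteDimensional ℝ V]
    (Λ : AddSubgroup V)
    (hΛ : Λ = AddSubgroup.closure (Set.extremePoints ℝ (Metric.closedBall (0 : V) 1)))
    (v : V) :
    ∃ x ∈ Λ, ‖x - v‖ ≤ (Module.finrank ℝ V : ℝ) / 2 := by
  set E := (Metric.closedBall (0 : V) 1).extremePoints ℝ
  have hspan : Submodule.span ℝ E = ⊤ :=
    span_extremePoints_eq_top (isCompact_closedBall 0 1) (convex_closedBall 0 1)
      ⟨0, Metric.ball_subset_interior_closedBall (Metric.mem_ball_self one_pos)⟩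
  let b := Module.Basis.ofSpan hspan.ge
  have hbE : range b ⊆ E := Module.Basis.ofSpan_subset hspan.ge
  have hb_norm (i) : ‖b i‖ ≤ 1 :=
    mem_closedBall_zero_iff.mp (extremePoints_subset (hbE (mem_range_self i)))
  obtain ⟨x, hx, hxv⟩ := b.exists_mem_closure_range_norm_sub_le v
  refine ⟨x, hΛ ▸ AddSubgroup.closure_mono hbE hx, hxv.trans ?_⟩
  calc (∑ i, ‖b i‖) / 2 ≤ (∑ _i, 1) / 2 := by gcongr with i; exact hb_norm i
    _ = (Module.finrank ℝ V : ℝ) / 2 := by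
        rw [Module.finrank_eq_card_basis b, Finset.sum_const, Finset.card_univ, nsmul_one]

/-- Let `V` be a finite-dimensional real normed space of dimension
`d ≥ 1` and let `Λ` be the additive subgroup generated by the extreme points of the
closed unit ball. Then every `v ∈ V` is within distance `d / 2` of a point of `Λ`. -/
theorem exists_latticePoint_near
    {V : Type*} [NormedAddCommGroup V] [NormedSpace ℝ V] [FiniteDimensional ℝ V]
    (hd : 1 ≤ Module.finrank ℝ V)
    (Λ : AddSubgroup V)
    (hΛ : Λ = AddSubgroup.closure (Set.extremePoints ℝ (Metric.closedBall (0 : V) 1)))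
    (v : V) :
    ∃ x ∈ Λ, ‖x - v‖ ≤ (Module.finrank ℝ V : ℝ) / 2 :=
  exists_latticePoint_near_general Λ hΛ v
end

section
/- Let V be a finite-dimensional real normed space and let v be an ℓ∞-direction of V. Then the subspace corresponding to v is unique: if U and U′ are subspaces with V = span{v} ⊕ U, ‖αv + u‖ = max(|α|, ‖u‖) for all α ∈ ℝ, u ∈ U, and likewise for U′, then U = U′. -/
/-!
If `x ∈ U'` is written as `β • v + u` with `u ∈ U`, the two norm formulas give
`max |t| ‖x‖ = ‖t • v + x‖ = max |t + β| ‖u‖` for every `t : ℝ`. For `t` large both maxima are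
attained by their first argument, so `t = t + β`, i.e. `β = 0` and `x ∈ U`.
-/

/-- `v` is an ℓ∞-direction of `V` with corresponding subspace `U`: `v` is a unit
vector, `V = span{v} ⊕ U` (algebraic direct sum), and
`‖α • v + u‖ = max |α| ‖u‖` for all `α : ℝ` and `u ∈ U`. -/
def IsLinftyDirection {V : Type*} [NormedAddCommGroup V] [NormedSpace ℝ V]
    (v : V) (U : Submodule ℝ V) : Prop :=
  ‖v‖ = 1 ∧ IsCompl (Submodule.span ℝ {v}) U ∧
    ∀ (α : ℝ), ∀ u ∈ U, ‖α • v + u‖ = max |α| ‖u‖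

open Submodule

theorem eq_zero_of_forall_max_abs_eq_max_abs_add {β a b : ℝ}
    (h : ∀ t : ℝ, max |t| a = max |t + β| b) : β = 0 := by
  set t := |a| + |b| + |β| with ht_def
  have := le_abs_self a; have := le_abs_self b; have := neg_abs_le β
  have := abs_nonneg a; have := abs_nonneg b; have := abs_nonneg β
  have hleft : max |t| a = t := by
    rw [abs_of_nonneg (by linarith)]; exact max_eq_left (by linarith)
  have hright : max |t + β| b = t + β := by
    rw [abs_of_nonneg (by linarith)]; exact max_eq_left (by linarith)
  linarith [h t]

theorem le_of_codisjoint_of_norm_smul_add_eq_max {V : Type*} [NormedAddCommGroup V]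
    [NormedSpace ℝ V] {v : V} {U U' : Submodule ℝ V} (hcodisj : Codisjoint (span ℝ {v}) U)
    (hU : ∀ (α : ℝ), ∀ u ∈ U, ‖α • v + u‖ = max |α| ‖u‖)
    (hU' : ∀ (α : ℝ), ∀ x ∈ U', ‖α • v + x‖ = max |α| ‖x‖) :
    U' ≤ U := by
  intro x hx
  obtain ⟨_, hβ, u, hu, rfl⟩ := mem_sup.mp (hcodisj.eq_top ▸ mem_top : x ∈ span ℝ {v} ⊔ U)
  obtain ⟨β, rfl⟩ := mem_span_singleton.mp hβ
  have hβ0 : β = 0 := by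
    refine eq_zero_of_forall_max_abs_eq_max_abs_add (a := ‖β • v + u‖) (b := ‖u‖) fun t => ?_
    rw [← hU' t _ hx, ← hU (t + β) u hu, add_smul, add_assoc]
  simpa [hβ0] using hu

theorem linftyDirection_subspace_unique_general
    {V : Type*} [NormedAddCommGroup V] [NormedSpace ℝ V]
    (v : V) (U U' : Submodule ℝ V)
    (hU : IsLinftyDirection v U) (hU' : IsLinftyDirection v U') :
    U = U' :=
  le_antisymm (le_of_codisjoint_of_norm_smul_add_eq_max hU'.2.1.codisjoint hU'.2.2 hU.2.2)
    (le_of_codisjoint_of_norm_smul_add_eq_max hU.2.1.codisjoint hU.2.2 hU'.2.2)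

/-- The subspace corresponding to an ℓ∞-direction is unique. -/
theorem linftyDirection_subspace_unique
    {V : Type*} [NormedAddCommGroup V] [NormedSpace ℝ V] [FiniteDimensional ℝ V]
    (v : V) (U U' : Submodule ℝ V)
    (hU : IsLinftyDirection v U) (hU' : IsLinftyDirection v U') :
    U = U' :=
  linftyDirection_subspace_unique_general v U U' hU hU'
end

section
/- Let V be a finite-dimensional real normed space and let v_1 and v_2 be distinct ℓ∞-directions (i.e., v_2 ≠ ±v_1) with corresponding subspaces U_1 and U_2. Then v_2 ∈ U_1. -/
/-!
Write `v₂ = α • v₁ + u` with `u ∈ U₁` and `v₁ = γ • v₂ + w` with `w ∈ U₂`; the goal is `α = 0`.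
Computing the norm of a vector of the plane `span {v₁, v₂}` in the two coordinate systems
gives two expressions that must agree. If `v₁ ∈ U₂`, comparing `‖v₂ ± v₁‖` forces `α = 0`,
so by symmetry it suffices to show `α = 0` or `γ = 0`. If `0 < |α| < 1`, then `‖u‖ = 1` and the
norm of `α • v₁ - v₂ = -u` forces `γ = 0`. If `|α| = |γ| = 1`, the norm of `v₂ - 2α • v₁` forces
`αγ = 1`, so `u = -α • w` lies in `U₁ ⊓ U₂`; then the norm of `v₂ + ‖u‖⁻¹ • u` computed in both
systems shows `u = 0`, i.e. `v₂ = ±v₁`.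
-/

namespace IsLinftyDirection

section

variable {V : Type*} [NormedAddCommGroup V] [NormedSpace ℝ V] {v u x : V} {U : Submodule ℝ V}

theorem norm_smul_add (h : IsLinftyDirection v U) (α : ℝ) (hu : u ∈ U) :
    ‖α • v + u‖ = max |α| ‖u‖ :=
  h.2.2 α u hu

theorem exists_eq_smul_add (h : IsLinftyDirection v U) (x : V) :
    ∃ α : ℝ, ∃ u ∈ U, x = α • v + u := by
  obtain ⟨y, hy, u, hu, rfl⟩ :=
    Submodule.mem_sup.mp (h.2.1.sup_eq_top ▸ Submodule.mem_top (x := x))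
  obtain ⟨α, rfl⟩ := Submodule.mem_span_singleton.mp hy
  exact ⟨α, u, hu, rfl⟩

theorem abs_le_norm_smul_add (h : IsLinftyDirection v U) (α : ℝ) (hu : u ∈ U) :
    |α| ≤ ‖α • v + u‖ :=
  (h.norm_smul_add α hu).symm ▸ le_max_left _ _

theorem norm_le_norm_smul_add (h : IsLinftyDirection v U) (α : ℝ) (hu : u ∈ U) :
    ‖u‖ ≤ ‖α • v + u‖ :=
  (h.norm_smul_add α hu).symm ▸ le_max_right _ _

theorem max_abs_norm_eq_one (h : IsLinftyDirection v U) {α : ℝ} (hu : u ∈ U) (hx : ‖x‖ = 1)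
    (hxe : x = α • v + u) : max |α| ‖u‖ = 1 := by
  rw [← h.norm_smul_add α hu, ← hxe, hx]

end

section

variable {V : Type*} [NormedAddCommGroup V] [NormedSpace ℝ V] {v₁ v₂ u w : V}
  {U₁ U₂ : Submodule ℝ V} {α γ : ℝ}

theorem mem_of_mem (h₁ : IsLinftyDirection v₁ U₁) (h₂ : IsLinftyDirection v₂ U₂)
    (h : v₁ ∈ U₂) : v₂ ∈ U₁ := by
  obtain ⟨α, u, hu, hv₂⟩ := h₁.exists_eq_smul_add v₂
  have key (ε : ℝ) (hε : |ε| = 1) : |α + ε| ≤ 1 :=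
    calc |α + ε| ≤ ‖(α + ε) • v₁ + u‖ := h₁.abs_le_norm_smul_add _ hu
      _ = ‖(1 : ℝ) • v₂ + ε • v₁‖ := by rw [hv₂]; congr 1; module
      _ = 1 := by
        rw [h₂.norm_smul_add 1 (U₂.smul_mem ε h), norm_smul, h₁.1, Real.norm_eq_abs, hε]
        simp
  have hα : α = 0 := by
    linarith [abs_le.mp (key 1 (by simp)), abs_le.mp (key (-1) (by simp))]
  rwa [hv₂, hα, zero_smul, zero_add]

theorem eq_zero_of_abs_lt_one (h₁ : IsLinftyDirection v₁ U₁) (h₂ : IsLinftyDirection v₂ U₂)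
    (hu : u ∈ U₁) (hv₂ : v₂ = α • v₁ + u) (hw : w ∈ U₂) (hv₁ : v₁ = γ • v₂ + w)
    (hα₀ : α ≠ 0) (hα₁ : |α| < 1) : γ = 0 := by
  have hu₁ : ‖u‖ = 1 := by
    rcases max_eq_iff.mp (h₁.max_abs_norm_eq_one hu h₂.1 hv₂) with ⟨h, -⟩ | ⟨h, -⟩
    · exact absurd h hα₁.ne
    · exact h
  have hw₁ : ‖w‖ ≤ 1 := h₂.max_abs_norm_eq_one hw h₁.1 hv₁ ▸ le_max_right _ _
  have hγ₁ : |γ| ≤ 1 := h₂.max_abs_norm_eq_one hw h₁.1 hv₁ ▸ le_max_left _ _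
  have hmax : max |α * γ - 1| (|α| * ‖w‖) = 1 :=
    calc max |α * γ - 1| (|α| * ‖w‖) = ‖(α * γ - 1) • v₂ + α • w‖ := by
          rw [h₂.norm_smul_add _ (U₂.smul_mem α hw), norm_smul, Real.norm_eq_abs]
      _ = ‖-u‖ := by congr 1; linear_combination (norm := module) -α • hv₁ - hv₂
      _ = 1 := by rw [norm_neg, hu₁]
  have hαγ : |α * γ - 1| = 1 := by
    rcases max_eq_iff.mp hmax with ⟨h, -⟩ | ⟨h, -⟩
    · exact h
    · nlinarith [abs_nonneg α, norm_nonneg w]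
  have hprod : |α * γ| < 1 := by
    rw [abs_mul]; nlinarith [abs_nonneg α, abs_nonneg γ]
  have hαγ₀ : α * γ = 0 := by
    rcases (abs_eq zero_le_one).mp hαγ with h | h
    · linarith [(abs_lt.mp hprod).2]
    · linarith
  exact (mul_eq_zero.mp hαγ₀).resolve_left hα₀

theorem eq_zero_of_mem_of_mem (h₁ : IsLinftyDirection v₁ U₁) (h₂ : IsLinftyDirection v₂ U₂)
    (hu₁ : u ∈ U₁) (hu₂ : u ∈ U₂) (hv₂ : v₂ = α • v₁ + u) : u = 0 := by
  by_contra hu₀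
  have hpos : 0 < ‖u‖ := norm_pos_iff.mpr hu₀
  have : ‖u‖ + 1 ≤ 1 :=
    calc ‖u‖ + 1 = ‖(1 + ‖u‖⁻¹) • u‖ := by
          rw [norm_smul, Real.norm_eq_abs, abs_of_pos (by positivity)]; field_simp
      _ ≤ ‖α • v₁ + (1 + ‖u‖⁻¹) • u‖ := h₁.norm_le_norm_smul_add α (U₁.smul_mem _ hu₁)
      _ = ‖(1 : ℝ) • v₂ + ‖u‖⁻¹ • u‖ := by rw [hv₂]; congr 1; module
      _ = 1 := by
        rw [h₂.norm_smul_add 1 (U₂.smul_mem _ hu₂), norm_smul, norm_inv, norm_norm,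
          inv_mul_cancel₀ hpos.ne', abs_one, max_self]
  linarith

theorem eq_zero_of_abs_eq_one (h₁ : IsLinftyDirection v₁ U₁) (h₂ : IsLinftyDirection v₂ U₂)
    (hu : u ∈ U₁) (hv₂ : v₂ = α • v₁ + u) (hw : w ∈ U₂) (hv₁ : v₁ = γ • v₂ + w)
    (hα : |α| = 1) (hγ : |γ| = 1) : u = 0 := by
  have hαγ : α * γ = 1 := by
    have hle : |1 - 2 * (α * γ)| ≤ 1 :=
      calc |1 - 2 * (α * γ)| ≤ ‖(1 - 2 * (α * γ)) • v₂ + (-2 * α) • w‖ :=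
            h₂.abs_le_norm_smul_add _ (U₂.smul_mem _ hw)
        _ = ‖(-α) • v₁ + u‖ := by congr 1; linear_combination (norm := module) hv₂ + (2 * α) • hv₁
        _ = 1 := by
          rw [h₁.norm_smul_add _ hu, abs_neg, hα]
          exact max_eq_left (h₁.max_abs_norm_eq_one hu h₂.1 hv₂ ▸ le_max_right _ _)
    rcases (abs_eq zero_le_one).mp (show |α * γ| = 1 by rw [abs_mul, hα, hγ, one_mul]) with h | h
    · exact h
    · rw [h] at hle; norm_num at hle
  have hu₂ : u ∈ U₂ := by
    have : u = (-α) • w := by linear_combination (norm := module) -hv₂ - α • hv₁ - hαγ • v₂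
    exact this ▸ U₂.smul_mem _ hw
  exact eq_zero_of_mem_of_mem h₁ h₂ hu hu₂ hv₂

end

end IsLinftyDirection

theorem linftyDirection_mem_of_distinct_general
    {V : Type*} [NormedAddCommGroup V] [NormedSpace ℝ V]
    (v₁ v₂ : V) (U₁ U₂ : Submodule ℝ V)
    (h₁ : IsLinftyDirection v₁ U₁) (h₂ : IsLinftyDirection v₂ U₂)
    (hne : v₂ ≠ v₁) (hne' : v₂ ≠ -v₁) :
    v₂ ∈ U₁ := by
  obtain ⟨α, u, hu, hv₂⟩ := h₁.exists_eq_smul_add v₂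
  obtain ⟨γ, w, hw, hv₁⟩ := h₂.exists_eq_smul_add v₁
  rcases eq_or_ne α 0 with rfl | hα₀
  · simpa [hv₂] using hu
  rcases eq_or_ne γ 0 with rfl | hγ₀
  · exact h₁.mem_of_mem h₂ (by simpa [hv₁] using hw)
  have hα : |α| ≤ 1 := h₁.max_abs_norm_eq_one hu h₂.1 hv₂ ▸ le_max_left _ _
  have hγ : |γ| ≤ 1 := h₂.max_abs_norm_eq_one hw h₁.1 hv₁ ▸ le_max_left _ _
  rcases hα.lt_or_eq with hα₁ | hα₁
  · exact absurd (h₁.eq_zero_of_abs_lt_one h₂ hu hv₂ hw hv₁ hα₀ hα₁) hγ₀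
  rcases hγ.lt_or_eq with hγ₁ | hγ₁
  · exact absurd (h₂.eq_zero_of_abs_lt_one h₁ hw hv₁ hu hv₂ hγ₀ hγ₁) hα₀
  rw [h₁.eq_zero_of_abs_eq_one h₂ hu hv₂ hw hv₁ hα₁ hγ₁, add_zero] at hv₂
  rcases (abs_eq zero_le_one).mp hα₁ with rfl | rfl
  · exact absurd (hv₂.trans (one_smul ℝ v₁)) hne
  · exact absurd (hv₂.trans (neg_one_smul ℝ v₁)) hne'

/-- If `v₁`, `v₂` are distinct ℓ∞-directions (`v₂ ≠ ±v₁`) with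
corresponding subspaces `U₁`, `U₂`, then `v₂ ∈ U₁`. -/
theorem linftyDirection_mem_of_distinct
    {V : Type*} [NormedAddCommGroup V] [NormedSpace ℝ V] [FiniteDimensional ℝ V]
    (v₁ v₂ : V) (U₁ U₂ : Submodule ℝ V)
    (h₁ : IsLinftyDirection v₁ U₁) (h₂ : IsLinftyDirection v₂ U₂)
    (hne : v₂ ≠ v₁) (hne' : v₂ ≠ -v₁) :
    v₂ ∈ U₁ :=
  linftyDirection_mem_of_distinct_general v₁ v₂ U₁ U₂ h₁ h₂ hne hne'
end

section
/- Let V be a finite-dimensional real normed space. Then there is a unique maximal subspace W isometrically isomorphic to ℓ∞^d for some d ≥ 0 with the property that there is a subspace U with V = U ⊕ W and ‖u + w‖ = max(‖u‖, ‖w‖) for all u ∈ U and w ∈ W. Moreover, if v_1, …, v_d are all the ℓ∞-directions of V with corresponding subspaces U_1, …, U_d, then W = span{v_1, …, v_d} and U = U_1 ∩ … ∩ U_d. -/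
open Submodule

theorem codisjoint_iInf_iSup_of_isCompl {R E ι : Type*} [Ring R] [AddCommGroup E] [Module R E]
    [Fintype ι] {P Q : ι → Submodule R E} (hPQ : ∀ i, IsCompl (P i) (Q i))
    (hle : Pairwise fun i j => P i ≤ Q j) : Codisjoint (⨅ i, Q i) (⨆ i, P i) := by
  classical
  rw [codisjoint_iff, eq_top_iff]
  intro x _
  let π i := (P i).projection (Q i) (hPQ i) x
  refine mem_sup.mpr ⟨x - ∑ i, π i, mem_iInf _ |>.mpr fun j => ?_, ∑ i, π i,
    sum_mem fun i _ => mem_iSup_of_mem i (projection_apply_mem _ x), sub_add_cancel _ _⟩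
  rw [← Finset.add_sum_erase _ _ (Finset.mem_univ j), sub_add_eq_sub_sub]
  exact sub_mem (sub_projection_mem _ x) (sum_mem fun i hi =>
    hle (Finset.ne_of_mem_erase hi) (projection_apply_mem _ x))

/-- Compare the two values at the midpoint with those at the endpoints: whichever term attains
the maximum at `m` would have to be constant along the interval. -/
theorem eq_zero_of_max_abs_eq_on_interval {γ c' c m : ℝ} (hc : 0 < c) (hc' : 0 ≤ c')
    (h : ∀ α, |α - m| ≤ c → max |1 + α * γ| (|α| * c') = c) : γ = 0 := by
  have hlo := h (m - c) (by rw [sub_sub_cancel_left, abs_neg, abs_of_pos hc])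
  have hmid := h m (by rw [sub_self, abs_zero]; exact hc.le)
  have hhi := h (m + c) (by rw [add_sub_cancel_left, abs_of_pos hc])
  rcases max_choice |1 + m * γ| (|m| * c') with hm | hm <;> rw [hm] at hmid
  · have h1 := abs_le.mp ((le_max_left _ _).trans hlo.le)
    have h2 := abs_le.mp ((le_max_left _ _).trans hhi.le)
    have : c * γ = 0 := by
      rcases abs_eq hc.le |>.mp hmid with h0 | h0 <;> nlinarith
    simpa [hc.ne'] using this
  · have h1 := (le_max_right _ _).trans hlo.le
    have h2 := (le_max_right _ _).trans hhi.le
    have hc'pos : 0 < c' := by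
      rcases hc'.lt_or_eq with h | h
      · exact h
      · rw [← h, mul_zero] at hmid; linarith
    exfalso
    rcases le_or_gt 0 m with hm0 | hm0
    · rw [abs_of_nonneg hm0] at hmid
      rw [abs_of_pos (by linarith)] at h2
      nlinarith
    · rw [abs_of_neg hm0] at hmid
      rw [abs_of_neg (by linarith)] at h1
      nlinarith

section Normed

variable {V : Type*} [NormedAddCommGroup V] [NormedSpace ℝ V]

def IsLinftySum (U W : Submodule ℝ V) : Prop :=
  ∀ u ∈ U, ∀ w ∈ W, ‖u + w‖ = max ‖u‖ ‖w‖

theorem IsLinftySum.disjoint {U W : Submodule ℝ V} (h : IsLinftySum U W) : Disjoint U W := by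
  rw [disjoint_def]
  intro x hxU hxW
  have h0 := h (-x) (neg_mem hxU) x hxW
  rw [neg_add_cancel, norm_zero, norm_neg, max_self] at h0
  exact norm_eq_zero.mp h0.symm

namespace IsLinftyDirection

theorem of_codisjoint {v : V} {U : Submodule ℝ V} (hv : ‖v‖ = 1) (hcod : Codisjoint (ℝ ∙ v) U)
    (hmax : ∀ α : ℝ, ∀ u ∈ U, ‖α • v + u‖ = max |α| ‖u‖) : IsLinftyDirection v U := by
  refine ⟨hv, ⟨IsLinftySum.disjoint fun p hp u hu => ?_, hcod⟩, hmax⟩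
  obtain ⟨α, rfl⟩ := mem_span_singleton.mp hp
  rw [hmax α u hu, norm_smul, hv, mul_one, Real.norm_eq_abs]

theorem exists_smul_add {v : V} {U : Submodule ℝ V} (h : IsLinftyDirection v U) (x : V) :
    ∃ a : ℝ, ∃ u ∈ U, a • v + u = x := by
  obtain ⟨p, hp, u, hu, rfl⟩ := mem_sup.mp (h.2.1.codisjoint.eq_top ▸ mem_top : x ∈ (ℝ ∙ v) ⊔ U)
  obtain ⟨a, rfl⟩ := mem_span_singleton.mp hp
  exact ⟨a, u, hu, rfl⟩

theorem mem_of_notMem_span {v w : V} {Uv Uw : Submodule ℝ V} (hv : IsLinftyDirection v Uv)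
    (hw : IsLinftyDirection w Uw) (hwv : w ∉ ℝ ∙ v) : v ∈ Uw := by
  obtain ⟨β, u, hu, hwu⟩ := hv.exists_smul_add w
  obtain ⟨γ, u', hu', hvu'⟩ := hw.exists_smul_add v
  have hu0 : 0 < ‖u‖ := norm_pos_iff.mpr fun h => hwv <| by
    rw [← hwu, h, add_zero]; exact smul_mem _ _ (mem_span_singleton_self v)
  have hγ : γ = 0 := by
    refine eq_zero_of_max_abs_eq_on_interval (m := -β) hu0 (norm_nonneg u') fun α hα => ?_
    have hv_side : ‖α • v + w‖ = ‖u‖ := by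
      rw [sub_neg_eq_add] at hα
      rw [← hwu, show α • v + (β • v + u) = (α + β) • v + u by module, hv.2.2 _ u hu,
        max_eq_right hα]
    have hw_side : ‖α • v + w‖ = max |1 + α * γ| (|α| * ‖u'‖) := by
      rw [← hvu', show α • (γ • w + u') + w = (1 + α * γ) • w + α • u' by module,
        hw.2.2 _ _ (smul_mem _ _ hu'), norm_smul, Real.norm_eq_abs]
    rw [← hw_side, hv_side]
  rwa [← hvu', hγ, zero_smul, zero_add]

theorem mem_of_ne {v w : V} {Uv Uw : Submodule ℝ V} (hv : IsLinftyDirection v Uv)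
    (hw : IsLinftyDirection w Uw) (hne : w ≠ v) (hne' : w ≠ -v) : w ∈ Uv := by
  refine hw.mem_of_notMem_span hv fun hvw => ?_
  obtain ⟨a, rfl⟩ := mem_span_singleton.mp hvw
  have ha : |a| = 1 := by simpa [norm_smul, hw.1] using hv.1
  rcases (abs_eq zero_le_one).mp ha with rfl | rfl
  · exact hne (one_smul ℝ w).symm
  · exact hne' (by rw [neg_one_smul, neg_neg])

variable {ι : Type*} {v : ι → V} {Usub : ι → Submodule ℝ V}

theorem nnnorm_sum_smul_add (hdir : ∀ i, IsLinftyDirection (v i) (Usub i))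
    (hmem : Pairwise fun i j => v i ∈ Usub j) (s : Finset ι) (α : ι → ℝ) {u : V}
    (hu : ∀ i ∈ s, u ∈ Usub i) :
    ‖∑ i ∈ s, α i • v i + u‖₊ = (s.sup fun i => ‖α i‖₊) ⊔ ‖u‖₊ := by
  classical
  induction s using Finset.induction_on with
  | empty => simp
  | insert a s ha ih =>
    have hrest : ∑ i ∈ s, α i • v i + u ∈ Usub a :=
      add_mem (sum_mem fun i hi => smul_mem _ _ (hmem (ne_of_mem_of_not_mem hi ha)))
        (hu a (Finset.mem_insert_self a s))
    rw [Finset.sum_insert ha, add_assoc, Finset.sup_insert, sup_assoc,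
      ← ih fun i hi => hu i (Finset.mem_insert_of_mem hi)]
    apply NNReal.coe_injective
    rw [NNReal.coe_max, coe_nnnorm, coe_nnnorm, coe_nnnorm, (hdir a).2.2 _ _ hrest,
      Real.norm_eq_abs]

theorem norm_sum_smul_add [Fintype ι] (hdir : ∀ i, IsLinftyDirection (v i) (Usub i))
    (hmem : Pairwise fun i j => v i ∈ Usub j) (α : ι → ℝ) {u : V} (hu : u ∈ ⨅ i, Usub i) :
    ‖∑ i, α i • v i + u‖ = max ‖α‖ ‖u‖ := by
  rw [← coe_nnnorm, nnnorm_sum_smul_add hdir hmem _ α fun i _ => mem_iInf _ |>.mp hu i,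
    ← Pi.nnnorm_def α, NNReal.coe_max, coe_nnnorm, coe_nnnorm]

theorem norm_sum_smul [Fintype ι] (hdir : ∀ i, IsLinftyDirection (v i) (Usub i))
    (hmem : Pairwise fun i j => v i ∈ Usub j) (α : ι → ℝ) : ‖∑ i, α i • v i‖ = ‖α‖ := by
  simpa using norm_sum_smul_add hdir hmem α (zero_mem _)

theorem isLinftySum_iInf_span [Fintype ι] (hdir : ∀ i, IsLinftyDirection (v i) (Usub i))
    (hmem : Pairwise fun i j => v i ∈ Usub j) :
    IsLinftySum (⨅ i, Usub i) (span ℝ (Set.range v)) := by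
  intro u hu w hw
  obtain ⟨α, rfl⟩ := (mem_span_range_iff_exists_fun ℝ).mp hw
  rw [add_comm, norm_sum_smul_add hdir hmem α hu, norm_sum_smul hdir hmem, max_comm]

theorem map {E F : Type*} [NormedAddCommGroup E] [NormedSpace ℝ E] [NormedAddCommGroup F]
    [NormedSpace ℝ F] {v : E} {U : Submodule ℝ E} (h : IsLinftyDirection v U) (e : E ≃ₗᵢ[ℝ] F) :
    IsLinftyDirection (e v) (U.map (e : E →ₗ[ℝ] F)) := by
  refine of_codisjoint (by rw [e.norm_map, h.1]) ?_ ?_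
  · refine codisjoint_iff.mpr <| eq_top_iff.mpr fun y _ => ?_
    obtain ⟨a, u, hu, hy⟩ := h.exists_smul_add (e.symm y)
    exact mem_sup.mpr ⟨a • e v, smul_mem _ _ (mem_span_singleton_self _), e u,
      mem_map_of_mem hu, by rw [← map_smul, ← map_add, hy, e.apply_symm_apply]⟩
  · rintro α _ ⟨u, hu, rfl⟩
    change ‖α • e v + e u‖ = max |α| ‖e u‖
    rw [← map_smul, ← map_add, e.norm_map, e.norm_map, h.2.2 α u hu]

theorem coe_of_isLinftySum {U' W' : Submodule ℝ V} (hC : Codisjoint U' W')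
    (hN : IsLinftySum U' W') {w : W'} {K : Submodule ℝ W'} (hw : IsLinftyDirection w K) :
    IsLinftyDirection (w : V) (U' ⊔ K.map W'.subtype) := by
  refine of_codisjoint (by rw [norm_coe, hw.1]) ?_ fun α x hx => ?_
  · have hW' : W' ≤ (ℝ ∙ (w : V)) ⊔ K.map W'.subtype := by
      conv_lhs => rw [← map_subtype_top W', ← hw.2.1.codisjoint.eq_top]
      rw [Submodule.map_sup, map_span, Set.image_singleton, subtype_apply]
    rw [codisjoint_iff, eq_top_iff, ← hC.eq_top, sup_left_comm]
    exact sup_le_sup_left hW' U'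
  · obtain ⟨u, hu, _, ⟨k, hk, rfl⟩, rfl⟩ := mem_sup.mp hx
    calc ‖α • (w : V) + (u + k)‖ = ‖u + ((α • w + k : W') : V)‖ := by push_cast; congr 1; abel
      _ = max ‖u‖ (max |α| ‖k‖) := by
        rw [hN u hu _ (coe_mem _), norm_coe, hw.2.2 α k hk]
      _ = max |α| ‖u + k‖ := by rw [hN u hu k k.2, norm_coe, max_left_comm]

end IsLinftyDirection

theorem isLinftyDirection_single {ι : Type*} [Fintype ι] [DecidableEq ι] (i : ι) :
    IsLinftyDirection (Pi.single i 1 : ι → ℝ) (LinearMap.ker (LinearMap.proj i)) := by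
  refine .of_codisjoint (by rw [Pi.norm_single, norm_one]) ?_ fun α u hu => ?_
  · refine codisjoint_iff.mpr <| eq_top_iff.mpr fun x _ => mem_sup.mpr
      ⟨x i • Pi.single i 1, smul_mem _ _ (mem_span_singleton_self _), x - x i • Pi.single i 1,
        ?_, add_sub_cancel _ _⟩
    simp
  · have hui : u i = 0 := hu
    have hcoord : ∀ j ≠ i, (α • Pi.single i 1 + u : ι → ℝ) j = u j := fun j hj => by simp [hj]
    have hcoord_i : (α • Pi.single i 1 + u : ι → ℝ) i = α := by simp [hui]
    refine le_antisymm ((pi_norm_le_iff_of_nonneg (by positivity)).mpr fun j => ?_) ?_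
    · rcases eq_or_ne j i with rfl | hj
      · simp [hui]
      · exact hcoord j hj ▸ (norm_le_pi_norm u j).trans (le_max_right _ _)
    · have hα := norm_le_pi_norm (α • Pi.single i 1 + u : ι → ℝ) i
      rw [hcoord_i, Real.norm_eq_abs] at hα
      refine max_le hα ((pi_norm_le_iff_of_nonneg (norm_nonneg _)).mpr fun j => ?_)
      rcases eq_or_ne j i with rfl | hj
      · simp [hui]
      · exact hcoord j hj ▸ norm_le_pi_norm _ j

theorem IsLinftySum.le_of_forall_isLinftyDirection_mem {ι : Type*} [Fintype ι]
    {W U' W' : Submodule ℝ V} (hN : IsLinftySum U' W') (hC : Codisjoint U' W')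
    (e : W' ≃ₗᵢ[ℝ] (ι → ℝ)) (hall : ∀ w Uw, IsLinftyDirection w Uw → w ∈ W) : W' ≤ W := by
  classical
  let b := (Pi.basisFun ℝ ι).map e.symm.toLinearEquiv
  calc W' = (⊤ : Submodule ℝ W').map W'.subtype := (map_subtype_top W').symm
    _ = span ℝ (W'.subtype '' Set.range b) := by rw [← b.span_eq, map_span]
    _ ≤ W := span_le.mpr <| by
      rintro _ ⟨_, ⟨i, rfl⟩, rfl⟩
      exact hall _ _ (((isLinftyDirection_single i).map e.symm).coe_of_isLinftySum hC hN)

end Normed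

theorem linfty_decomposition_general
    {V : Type*} [NormedAddCommGroup V] [NormedSpace ℝ V]
    (d : ℕ) (v : Fin d → V) (Usub : Fin d → Submodule ℝ V)
    (hdir : ∀ i, IsLinftyDirection (v i) (Usub i))
    (hdist : ∀ i j, i ≠ j → v i ≠ v j ∧ v i ≠ -(v j))
    (hall : ∀ (w : V) (Uw : Submodule ℝ V), IsLinftyDirection w Uw →
      ∃ i, w = v i ∨ w = -(v i))
    (W : Submodule ℝ V) (hW : W = Submodule.span ℝ (Set.range v))
    (U : Submodule ℝ V) (hU : U = ⨅ i, Usub i) :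
    IsCompl U W ∧
    (∀ u ∈ U, ∀ w ∈ W, ‖u + w‖ = max ‖u‖ ‖w‖) ∧
    Nonempty (W ≃ₗᵢ[ℝ] (Fin d → ℝ)) ∧
    (∀ (d' : ℕ) (U' W' : Submodule ℝ V), IsCompl U' W' →
      (∀ u ∈ U', ∀ w ∈ W', ‖u + w‖ = max ‖u‖ ‖w‖) →
      Nonempty (W' ≃ₗᵢ[ℝ] (Fin d' → ℝ)) → W' ≤ W) := by
  subst hW hU
  have hmem : Pairwise fun i j => v i ∈ Usub j := fun i j hij =>
    (hdir j).mem_of_ne (hdir i) (hdist i j hij).1 (hdist i j hij).2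
  let f : (Fin d → ℝ) →ₗᵢ[ℝ] V := ⟨Fintype.linearCombination ℝ v, fun α => by
    rw [Fintype.linearCombination_apply, IsLinftyDirection.norm_sum_smul hdir hmem]⟩
  have hsum := IsLinftyDirection.isLinftySum_iInf_span hdir hmem
  refine ⟨⟨hsum.disjoint, ?_⟩, hsum, ⟨?_⟩, ?_⟩
  · rw [span_range_eq_iSup]
    exact codisjoint_iInf_iSup_of_isCompl (fun i => (hdir i).2.1)
      fun i j hij => span_singleton_le_iff_mem _ _ |>.mpr (hmem hij)
  · exact (f.equivRange.trans (.ofEq _ _ (Fintype.range_linearCombination ℝ v))).symm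
  · rintro d' U' W' hC hN ⟨e⟩
    refine IsLinftySum.le_of_forall_isLinftyDirection_mem hN hC.codisjoint e fun w Uw hw => ?_
    obtain ⟨i, rfl | rfl⟩ := hall w Uw hw
    · exact subset_span ⟨i, rfl⟩
    · exact neg_mem (subset_span ⟨i, rfl⟩)

/-- the ℓ∞-decomposition.  Let `v₁, …, v_d` be an enumeration of
all the ℓ∞-directions (pairwise distinct up to sign, and every ℓ∞-direction is some
`±vᵢ`), with corresponding subspaces `U₁, …, U_d`.  Set `W = span{v₁, …, v_d}` and
`U = U₁ ∩ ⋯ ∩ U_d`.  Then `V = U ⊕ W` with `‖u + w‖ = max ‖u‖ ‖w‖`, the subspace `W`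
is isometrically isomorphic to `ℓ∞^d` (here `Fin d → ℝ` with the sup norm), and `W`
is the unique maximal such subspace: any subspace `W'` isometric to some `ℓ∞^{d'}`
admitting a complement `U'` with the max-norm property satisfies `W' ⊆ W`. -/
theorem linfty_decomposition
    {V : Type*} [NormedAddCommGroup V] [NormedSpace ℝ V] [FiniteDimensional ℝ V]
    (d : ℕ) (v : Fin d → V) (Usub : Fin d → Submodule ℝ V)
    (hdir : ∀ i, IsLinftyDirection (v i) (Usub i))
    (hdist : ∀ i j, i ≠ j → v i ≠ v j ∧ v i ≠ -(v j))
    (hall : ∀ (w : V) (Uw : Submodule ℝ V), IsLinftyDirection w Uw →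
      ∃ i, w = v i ∨ w = -(v i))
    (W : Submodule ℝ V) (hW : W = Submodule.span ℝ (Set.range v))
    (U : Submodule ℝ V) (hU : U = ⨅ i, Usub i) :
    IsCompl U W ∧
    (∀ u ∈ U, ∀ w ∈ W, ‖u + w‖ = max ‖u‖ ‖w‖) ∧
    Nonempty (W ≃ₗᵢ[ℝ] (Fin d → ℝ)) ∧
    (∀ (d' : ℕ) (U' W' : Submodule ℝ V), IsCompl U' W' →
      (∀ u ∈ U', ∀ w ∈ W', ‖u + w‖ = max ‖u‖ ‖w‖) →
      Nonempty (W' ≃ₗᵢ[ℝ] (Fin d' → ℝ)) → W' ≤ W) :=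
  linfty_decomposition_general d v Usub hdir hdist hall W hW U hU
end

section
/- Let d ≥ 1 and let f be a bijective isometry of ℓ∞^d (the space ℝ^d with norm ‖(x_1, …, x_d)‖ = max_i |x_i|, with standard basis e_1, …, e_d). Then there exist a permutation σ of {1, …, d}, signs ε = (ε_1, …, ε_d) ∈ {−1, +1}^d, and a vector c ∈ ℝ^d such that f(∑_{i=1}^d λ_i e_i) = c + ∑_{i=1}^d λ_i ε_i e_{σ(i)} for all λ_1, …, λ_d ∈ ℝ; i.e., f is a signed permutation of the coordinates composed with a translation. -/
/-! By Mazur–Ulam, `f - f 0` is a linear isometry `A`. Every row of its matrix has ℓ¹-norm at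
most 1, since the ℓ∞ operator norm is the largest row sum, while every column `A eᵢ` has sup
norm 1 and so contains an entry `±1`. Such an entry exhausts its row, so the rows chosen for
distinct columns are distinct, and `A eᵢ = ±e_{σ i}` for a permutation `σ`. -/

open Finset

section

variable {ι κ : Type*} [Fintype ι] [DecidableEq ι] [Fintype κ]

attribute [local instance] Matrix.linftyOpSeminormedAddCommGroup in
theorem LinearIsometry.sum_abs_apply_single_le_one (A : (ι → ℝ) →ₗᵢ[ℝ] (κ → ℝ)) (k : κ) :
    ∑ i, |A (Pi.single i 1) k| ≤ 1 := by
  set M := LinearMap.toMatrix' (A.toContinuousLinearMap : (ι → ℝ) →ₗ[ℝ] (κ → ℝ))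
  have hrow : ∑ i, ‖M k i‖₊ ≤ ‖M‖₊ := by
    rw [Matrix.linfty_opNNNorm_def]
    exact Finset.le_sup (f := fun k => ∑ i, ‖M k i‖₊) (mem_univ k)
  have hM : ‖M‖ ≤ 1 := by
    rw [Matrix.linfty_opNorm_toMatrix]
    exact A.norm_toContinuousLinearMap_le
  simpa [M, LinearMap.toMatrix'_apply] using (NNReal.coe_le_coe.mpr hrow).trans hM

theorem LinearIsometry.exists_abs_apply_single_eq_one (A : (ι → ℝ) →ₗᵢ[ℝ] (κ → ℝ)) (i : ι) :
    ∃ k, |A (Pi.single i 1) k| = 1 := by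
  have hnorm : ‖A (Pi.single i 1)‖ = 1 := by simp [Pi.norm_single]
  by_contra! h
  have hlt : ‖A (Pi.single i 1)‖ < 1 := by
    refine (pi_norm_lt_iff one_pos).mpr fun k => ?_
    have hle := (norm_le_pi_norm (A (Pi.single i 1)) k).trans hnorm.le
    rw [Real.norm_eq_abs] at hle ⊢
    exact hle.lt_of_ne (h k)
  exact hlt.ne hnorm

theorem eq_zero_of_sum_abs_le_one_of_abs_eq_one {a : ι → ℝ} {i j : ι}
    (hsum : ∑ l, |a l| ≤ 1) (hi : |a i| = 1) (hji : j ≠ i) : a j = 0 := by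
  have : |a i| + |a j| ≤ ∑ l, |a l| := by
    rw [← sum_pair (f := fun l => |a l|) hji.symm]
    exact sum_le_sum_of_subset_of_nonneg (subset_univ _) fun _ _ _ => abs_nonneg _
  exact abs_eq_zero.mp (le_antisymm (by linarith) (abs_nonneg _))

theorem LinearIsometry.exists_perm_apply_single_eq_smul_single (A : (ι → ℝ) →ₗᵢ[ℝ] (ι → ℝ)) :
    ∃ (σ : Equiv.Perm ι) (ε : ι → ℝ), (∀ i, ε i = 1 ∨ ε i = -1) ∧
      ∀ i, A (Pi.single i 1) = ε i • Pi.single (σ i) 1 := by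
  choose τ hτ using A.exists_abs_apply_single_eq_one
  have hzero : ∀ i j, j ≠ i → A (Pi.single j 1) (τ i) = 0 := fun i j hji =>
    eq_zero_of_sum_abs_le_one_of_abs_eq_one (a := fun l => A (Pi.single l 1) (τ i))
      (A.sum_abs_apply_single_le_one (τ i)) (hτ i) hji
  have hinj : Function.Injective τ := by
    intro i j hij
    by_contra hne
    have := hτ j
    rw [← hij, hzero i j (Ne.symm hne)] at this
    norm_num at this
  let σ := Equiv.ofBijective τ (Finite.injective_iff_bijective.mp hinj)
  refine ⟨σ, fun i => A (Pi.single i 1) (τ i), fun i => (abs_eq one_pos.le).mp (hτ i),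
    fun i => ?_⟩
  ext k
  obtain ⟨j, rfl⟩ := σ.surjective k
  by_cases hji : j = i
  · subst hji
    simp [σ]
  · simp [σ, hzero j i (Ne.symm hji), hinj.ne hji]

end

theorem isometry_linfty_eq_signed_perm_translation_general
    (d : ℕ)
    (f : (Fin d → ℝ) → (Fin d → ℝ))
    (hbij : Function.Bijective f)
    (hisom : ∀ x y : Fin d → ℝ, ‖f x - f y‖ = ‖x - y‖) :
    ∃ (σ : Equiv.Perm (Fin d)) (ε : Fin d → ℝ) (c : Fin d → ℝ),
      (∀ i, ε i = 1 ∨ ε i = -1) ∧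
      ∀ x : Fin d → ℝ,
        f x = c + ∑ i, (ε i * x i) • (Pi.single (σ i) (1 : ℝ) : Fin d → ℝ) := by
  let e : (Fin d → ℝ) ≃ᵢ (Fin d → ℝ) :=
    ⟨.ofBijective f hbij, .of_dist_eq fun x y => by
      rw [dist_eq_norm, dist_eq_norm]; exact hisom x y⟩
  -- Mazur–Ulam: `A x = f x - f 0` holds definitionally.
  set A := e.toRealLinearIsometryEquiv.toLinearIsometry
  obtain ⟨σ, ε, hε, hA⟩ := A.exists_perm_apply_single_eq_smul_single
  refine ⟨σ, ε, f 0, hε, fun x => ?_⟩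
  calc
    f x = f 0 + A x := (add_sub_cancel (f 0) (f x)).symm
    _ = f 0 + ∑ i, x i • A (Pi.single i 1) := by
      conv_lhs => rw [pi_eq_sum_univ' x]
      simp only [map_sum, map_smul]
    _ = _ := by simp only [hA, smul_smul, mul_comm]

/-- Every bijective isometry of `ℓ∞^d` (for `d ≥ 1`, here
`Fin d → ℝ` with the sup norm) is a signed permutation of the coordinates composed
with a translation: there are a permutation `σ`, signs `ε i ∈ {−1, +1}` and a
vector `c` such that `f x = c + ∑ i, (ε i * x i) • e_{σ i}` for all `x`. -/
theorem isometry_linfty_eq_signed_perm_translation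
    (d : ℕ) (hd : 1 ≤ d)
    (f : (Fin d → ℝ) → (Fin d → ℝ))
    (hbij : Function.Bijective f)
    (hisom : ∀ x y : Fin d → ℝ, ‖f x - f y‖ = ‖x - y‖) :
    ∃ (σ : Equiv.Perm (Fin d)) (ε : Fin d → ℝ) (c : Fin d → ℝ),
      (∀ i, ε i = 1 ∨ ε i = -1) ∧
      ∀ x : Fin d → ℝ,
        f x = c + ∑ i, (ε i * x i) • (Pi.single (σ i) (1 : ℝ) : Fin d → ℝ) :=
  isometry_linfty_eq_signed_perm_translation_general d f hbij hisom
end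

section
/- Let V be a finite-dimensional real normed space, let S be a countable dense subset of V, and let f be a step-isometry on S. Then there is a unique continuous function f̄ : V → V extending f; moreover f̄ is a step-isometry of V and preserves integer distances, i.e., for every k ∈ ℕ, ‖x − y‖ = k implies ‖f̄(x) − f̄(y)‖ = k. -/
/-!
Near a point `x`, `f` maps the points of `S` that are close to `x` into a ball of radius `2`,
so in finite dimension it has cluster values along `S` at `x`. Two cluster values `a ≠ b` are
impossible: choose `p, q ∈ S` with `‖p - a‖ < 1`, `‖q - b‖ > 2` and `‖p - q‖ < 1`; since `f`
preserves `⌊‖·‖⌋`, their preimages lie within `1` and at least `2` from `x`, yet less than `1`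
apart. Hence `f` has a limit along `S` at every point, and these limits form the continuous
extension `g`. An integer bound `m < ‖p - r‖` (or `‖p - r‖ < m`) holds on an open set of pairs and
is transported by `f`, so by density of `S × S` the extension satisfies
`⌊‖x - y‖⌋ ≤ ⌊‖g x - g y‖⌋` and `⌈‖g x - g y‖⌉ ≤ ⌈‖x - y‖⌉`. The extension of `f⁻¹` is an inverse
of `g`, which makes `g` bijective and turns the first inequality into an equality.
-/

open Filter Function Metric Set Topology

theorem Dense.closure_subset_of_inter_subset {X : Type*} [TopologicalSpace X] {S U C : Set X}
    (hS : Dense S) (hU : IsOpen U) (hC : IsClosed C) (h : U ∩ S ⊆ C) : closure U ⊆ C :=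
  (closure_minimal (hS.open_subset_closure_inter hU) isClosed_closure).trans (closure_minimal h hC)

theorem Set.LeftInvOn.leftInverse_of_dense {X Y : Type*} [TopologicalSpace X] [T2Space X]
    [TopologicalSpace Y] {S : Set X} {T : Set Y} {f g : X → Y} {f' g' : Y → X}
    (h : LeftInvOn f' f S) (hf : MapsTo f S T) (hS : Dense S) (hg : Continuous g)
    (hg' : Continuous g') (hgf : EqOn g f S) (hg'f' : EqOn g' f' T) : LeftInverse g' g :=
  congrFun <| Continuous.ext_on hS (hg'.comp hg) continuous_id fun x hx =>
    show g' (g x) = x by rw [hgf hx, hg'f' (hf hx), h hx]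

section Geometry

variable {V : Type*} [NormedAddCommGroup V] [NormedSpace ℝ V]

open AffineMap in
theorem exists_dist_lt_one_two_lt_dist {a b : V} (hab : a ≠ b) :
    ∃ p q : V, dist p a < 1 ∧ 2 < dist q b ∧ dist p q < 1 := by
  -- `p`, `q` lie on the ray from `b` through `a`, at distances `t`, `2 t` beyond `a`,
  -- with `t < 1` and `2 - dist b a < 2 t`
  have hε : 0 < dist b a := dist_pos.2 hab.symm
  set t := 1 - min (dist b a) 1 / 3
  have ht₀ : 0 < t := by have := min_le_right (dist b a) 1; simp only [t]; linarith
  have ht₁ : t < 1 := by have := lt_min hε one_pos; simp only [t]; linarith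
  have ht₂ : 2 < dist b a + 2 * t := by
    have := min_le_left (dist b a) 1; have := lt_min hε one_pos; simp only [t]; linarith
  set s := t / dist b a
  have hs : s * dist b a = t := div_mul_cancel₀ t hε.ne'
  refine ⟨lineMap b a (1 + s), lineMap b a (1 + 2 * s), ?_, ?_, ?_⟩
  · rw [dist_lineMap_right, sub_add_cancel_left, norm_neg, Real.norm_of_nonneg (by positivity),
      hs]
    exact ht₁
  · rw [dist_lineMap_left, Real.norm_of_nonneg (by positivity), add_mul, mul_assoc, hs, one_mul]
    exact ht₂
  · rw [dist_lineMap_lineMap, dist_comm, Real.dist_eq, add_sub_add_left_eq_sub, two_mul,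
      add_sub_cancel_right, abs_of_pos (by positivity), hs]
    exact ht₁

theorem Dense.exists_dist_lt_one_two_lt_dist {S : Set V} (hS : Dense S) {a b : V} (hab : a ≠ b) :
    ∃ p ∈ S, ∃ q ∈ S, dist p a < 1 ∧ 2 < dist q b ∧ dist p q < 1 := by
  obtain ⟨p, q, h⟩ := _root_.exists_dist_lt_one_two_lt_dist hab
  have hU : IsOpen {z : V × V | dist z.1 a < 1 ∧ 2 < dist z.2 b ∧ dist z.1 z.2 < 1} :=
    (isOpen_lt (by fun_prop) continuous_const).and <|
      (isOpen_lt continuous_const (by fun_prop)).and (isOpen_lt (by fun_prop) continuous_const)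
  obtain ⟨⟨p', q'⟩, ⟨hp', hq'⟩, h'⟩ := (hS.prod hS).exists_mem_open hU ⟨(p, q), h⟩
  exact ⟨p', hp', q', hq', h'⟩

open AffineMap in
theorem mem_closure_setOf_dist_of_frequently {P : ℝ → Prop} (x y : V)
    (h : ∃ᶠ c in 𝓝 (1 : ℝ), P (|c| * dist x y)) :
    (x, y) ∈ closure {z : V × V | P (dist z.1 z.2)} := by
  have hlim : Tendsto (fun c : ℝ => (lineMap y x c, y)) (𝓝 1) (𝓝 (x, y)) := by
    simpa using ((lineMap_continuous (p := y) (q := x)).prodMk continuous_const).tendsto (1 : ℝ)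
  refine mem_closure_iff_frequently.2 (hlim.frequently (h.mono fun c hc => ?_))
  show P (dist (lineMap y x c) y)
  rwa [dist_lineMap_left, Real.norm_eq_abs, dist_comm]

end Geometry

def PreservesFloorDistOn {X : Type*} [PseudoMetricSpace X] (S : Set X) (f : X → X) : Prop :=
  ∀ x ∈ S, ∀ y ∈ S, ⌊dist x y⌋ = ⌊dist (f x) (f y)⌋

namespace PreservesFloorDistOn

section PseudoMetricSpace

variable {X : Type*} [PseudoMetricSpace X] {S : Set X} {f : X → X} {x y w a : X}

theorem dist_lt_intCast_iff (hf : PreservesFloorDistOn S f) (hx : x ∈ S) (hy : y ∈ S) (m : ℤ) :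
    dist (f x) (f y) < m ↔ dist x y < m := by
  rw [← Int.floor_lt, ← Int.floor_lt, hf x hx y hy]

theorem intCast_le_dist_iff (hf : PreservesFloorDistOn S f) (hx : x ∈ S) (hy : y ∈ S) (m : ℤ) :
    m ≤ dist (f x) (f y) ↔ m ≤ dist x y := by
  rw [← Int.le_floor, ← Int.le_floor, hf x hx y hy]

theorem invFunOn [Nonempty X] (hf : PreservesFloorDistOn S f) (hbij : BijOn f S S) :
    PreservesFloorDistOn S (invFunOn f S) := by
  intro x hx y hy
  have hmaps := hbij.surjOn.mapsTo_invFunOn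
  rw [hf _ (hmaps hx) _ (hmaps hy), hbij.invOn_invFunOn.2 hx, hbij.invOn_invFunOn.2 hy]

theorem exists_eventually_mem_closedBall (hS : Dense S) (hf : PreservesFloorDistOn S f) (x : X) :
    ∃ c, ∀ᶠ t in 𝓝[S] x, f t ∈ closedBall c 2 := by
  obtain ⟨s, hs, hxs⟩ := hS.exists_dist_lt x one_pos
  refine ⟨f s, ?_⟩
  filter_upwards [self_mem_nhdsWithin, mem_nhdsWithin_of_mem_nhds (ball_mem_nhds x one_pos)]
    with t ht htx
  have hts : dist t s < (2 : ℤ) := by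
    push_cast; linarith [dist_triangle t x s, mem_ball.1 htx]
  exact ((hf.dist_lt_intCast_iff ht hs 2).2 hts).le.trans_eq (by norm_num)

theorem dist_le_of_mapClusterPt (hf : PreservesFloorDistOn S f) (ha : MapClusterPt a (𝓝[S] x) f)
    (hw : w ∈ S) {m : ℤ} (h : dist (f w) a < m) : dist x w ≤ m := by
  have hfreq : ∃ᶠ t in 𝓝[S] x, t ∈ S ∧ f t ∈ ball (f w) m :=
    (mapClusterPt_iff_frequently.1 ha _ (isOpen_ball.mem_nhds (by rwa [mem_ball, dist_comm])))
      |>.and_eventually self_mem_nhdsWithin |>.mono fun t ht => ⟨ht.2, ht.1⟩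
  refine isClosed_closedBall.mem_of_frequently_of_tendsto (hfreq.mono fun t ⟨ht, hft⟩ => ?_)
    (tendsto_id.mono_left nhdsWithin_le_nhds)
  exact ((hf.dist_lt_intCast_iff ht hw m).1 hft).le

theorem le_dist_of_mapClusterPt (hf : PreservesFloorDistOn S f) (ha : MapClusterPt a (𝓝[S] x) f)
    (hw : w ∈ S) {m : ℤ} (h : m < dist (f w) a) : m ≤ dist x w := by
  have hfreq : ∃ᶠ t in 𝓝[S] x, f t ∈ (closedBall (f w) m)ᶜ ∧ t ∈ S :=
    (mapClusterPt_iff_frequently.1 ha _ (isClosed_closedBall.isOpen_compl.mem_nhds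
      (by rwa [mem_compl_iff, mem_closedBall, dist_comm, not_le])))
      |>.and_eventually self_mem_nhdsWithin
  refine not_lt.1 <| isOpen_ball.isClosed_compl.mem_of_frequently_of_tendsto
    (hfreq.mono fun t ⟨hft, ht⟩ => ?_) (tendsto_id.mono_left nhdsWithin_le_nhds)
  rw [mem_compl_iff, mem_closedBall, not_le] at hft
  exact not_lt.2 ((hf.intCast_le_dist_iff ht hw m).1 hft.le)

end PseudoMetricSpace

section NormedSpace

variable {V : Type*} [NormedAddCommGroup V] [NormedSpace ℝ V] {S : Set V} {f g : V → V}

theorem eq_of_mapClusterPt (hS : Dense S) (hsurj : SurjOn f S S) (hf : PreservesFloorDistOn S f)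
    {x a b : V} (ha : MapClusterPt a (𝓝[S] x) f) (hb : MapClusterPt b (𝓝[S] x) f) : a = b := by
  by_contra hab
  obtain ⟨p, hp, q, hq, hpa, hqb, hpq⟩ := hS.exists_dist_lt_one_two_lt_dist hab
  obtain ⟨w₁, hw₁, rfl⟩ := hsurj hp
  obtain ⟨w₂, hw₂, rfl⟩ := hsurj hq
  have h₁ : dist x w₁ ≤ 1 := by
    simpa using hf.dist_le_of_mapClusterPt ha hw₁ (m := 1) (by simpa using hpa)
  have h₂ : 2 ≤ dist x w₂ := by
    simpa using hf.le_dist_of_mapClusterPt hb hw₂ (m := 2) (by simpa using hqb)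
  have h₃ : dist w₁ w₂ < 1 := by
    simpa using (hf.dist_lt_intCast_iff hw₁ hw₂ 1).1 (by simpa using hpq)
  linarith [dist_triangle x w₁ w₂]

theorem exists_tendsto_nhdsWithin [ProperSpace V] (hS : Dense S) (hsurj : SurjOn f S S)
    (hf : PreservesFloorDistOn S f) (x : V) : ∃ y, Tendsto f (𝓝[S] x) (𝓝 y) := by
  have := mem_closure_iff_nhdsWithin_neBot.1 (hS x)
  obtain ⟨c, hc⟩ := hf.exists_eventually_mem_closedBall hS x
  have hK := isCompact_closedBall c 2
  obtain ⟨y, -, hy⟩ := hK.exists_mapClusterPt (f := 𝓝[S] x) (u := f) (le_principal_iff.2 hc)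
  exact ⟨y, hK.tendsto_nhds_of_unique_mapClusterPt hc
    fun z _ hz => hf.eq_of_mapClusterPt hS hsurj hz hy⟩

theorem exists_continuous_extension [ProperSpace V] (hS : Dense S) (hsurj : SurjOn f S S)
    (hf : PreservesFloorDistOn S f) : ∃ g : V → V, Continuous g ∧ EqOn g f S := by
  have hlim := hf.exists_tendsto_nhdsWithin hS hsurj
  refine ⟨extendFrom S f, continuous_extendFrom hS hlim,
    fun s hs => extendFrom_extends (fun s hs => ?_) s hs⟩
  obtain ⟨y, hy⟩ := hlim s
  rwa [ContinuousWithinAt,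
    tendsto_nhds_unique (tendsto_pure_nhds f s) (hy.mono_left (pure_le_nhdsWithin hs))]

theorem floor_dist_le_floor_dist (hS : Dense S) (hf : PreservesFloorDistOn S f)
    (hg : Continuous g) (hgf : EqOn g f S) (x y : V) : ⌊dist x y⌋ ≤ ⌊dist (g x) (g y)⌋ := by
  set m := ⌊dist x y⌋
  rcases le_or_gt m 0 with hm | hm
  · exact hm.trans (Int.floor_nonneg.2 dist_nonneg)
  have hsub : {z : V × V | (m : ℝ) < dist z.1 z.2} ∩ S ×ˢ S ⊆
      {z | (m : ℝ) ≤ dist (g z.1) (g z.2)} := fun z ⟨hz, h₁, h₂⟩ => by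
    show (m : ℝ) ≤ dist (g z.1) (g z.2)
    rw [hgf h₁, hgf h₂, hf.intCast_le_dist_iff h₁ h₂]
    exact hz.le
  have hxy : (x, y) ∈ closure {z : V × V | (m : ℝ) < dist z.1 z.2} := by
    refine mem_closure_setOf_dist_of_frequently x y ((frequently_gt_nhds 1).mono fun c hc => ?_)
    have hd : (0 : ℝ) < dist x y := (Int.cast_pos.2 hm).trans_le (Int.floor_le _)
    rw [abs_of_pos (one_pos.trans hc)]
    nlinarith [Int.floor_le (dist x y)]
  exact Int.le_floor.2 <| (hS.prod hS).closure_subset_of_inter_subset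
    (isOpen_lt continuous_const (by fun_prop)) (isClosed_le continuous_const (by fun_prop)) hsub hxy

theorem ceil_dist_le_ceil_dist (hS : Dense S) (hf : PreservesFloorDistOn S f)
    (hg : Continuous g) (hgf : EqOn g f S) (x y : V) : ⌈dist (g x) (g y)⌉ ≤ ⌈dist x y⌉ := by
  rcases eq_or_ne x y with rfl | hne
  · simp
  set m := ⌈dist x y⌉
  have hsub : {z : V × V | dist z.1 z.2 < m} ∩ S ×ˢ S ⊆
      {z | dist (g z.1) (g z.2) ≤ m} := fun z ⟨hz, h₁, h₂⟩ => by
    show dist (g z.1) (g z.2) ≤ m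
    rw [hgf h₁, hgf h₂]
    exact ((hf.dist_lt_intCast_iff h₁ h₂ m).2 hz).le
  have hxy : (x, y) ∈ closure {z : V × V | dist z.1 z.2 < m} := by
    refine mem_closure_setOf_dist_of_frequently (P := (· < (m : ℝ))) x y <|
      ((frequently_lt_nhds 1).and_eventually (eventually_gt_nhds one_pos)).mono fun c hc => ?_
    have hd : 0 < dist x y := dist_pos.2 hne
    rw [abs_of_pos hc.2]
    nlinarith [Int.le_ceil (dist x y)]
  exact Int.ceil_le.2 <| (hS.prod hS).closure_subset_of_inter_subset
    (isOpen_lt (by fun_prop) continuous_const) (isClosed_le (by fun_prop) continuous_const) hsub hxy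

end NormedSpace

end PreservesFloorDistOn

theorem stepIsometry_extends_general
    {V : Type*} [NormedAddCommGroup V] [NormedSpace ℝ V] [FiniteDimensional ℝ V]
    (S : Set V) (hSdense : Dense S)
    (f : V → V) (hbij : Set.BijOn f S S)
    (hstep : ∀ x ∈ S, ∀ y ∈ S, ⌊‖x - y‖⌋ = ⌊‖f x - f y‖⌋) :
    ∃ g : V → V,
      Continuous g ∧ Set.EqOn g f S ∧
      IsStepIsometry g ∧
      (∀ (k : ℕ) (x y : V), ‖x - y‖ = k → ‖g x - g y‖ = k) ∧
      (∀ g' : V → V, Continuous g' → Set.EqOn g' f S → g' = g) := by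
  have hf : PreservesFloorDistOn S f := fun x hx y hy => by
    simpa only [dist_eq_norm] using hstep x hx y hy
  have hf' := hf.invFunOn hbij
  have hinv : InvOn (invFunOn f S) f S S := hbij.invOn_invFunOn
  have hmaps' : MapsTo (invFunOn f S) S S := hbij.surjOn.mapsTo_invFunOn
  obtain ⟨g, hg, hgf⟩ := hf.exists_continuous_extension hSdense hbij.surjOn
  obtain ⟨g', hg', hg'f⟩ :=
    hf'.exists_continuous_extension hSdense (hinv.1.surjOn hbij.mapsTo)
  have hleft : LeftInverse g' g := hinv.1.leftInverse_of_dense hbij.mapsTo hSdense hg hg' hgf hg'f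
  have hright : LeftInverse g g' := hinv.2.leftInverse_of_dense hmaps' hSdense hg' hg hg'f hgf
  have hfloor (x y : V) : ⌊dist x y⌋ = ⌊dist (g x) (g y)⌋ := by
    refine (hf.floor_dist_le_floor_dist hSdense hg hgf x y).antisymm ?_
    simpa only [hleft x, hleft y] using hf'.floor_dist_le_floor_dist hSdense hg' hg'f (g x) (g y)
  refine ⟨g, hg, hgf, ⟨⟨hleft.injective, hright.surjective⟩, ?_⟩, fun k x y hk => ?_,
    fun g'' hg'' hg''f => hg''.ext_on hSdense hg (hg''f.trans hgf.symm)⟩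
  · simpa only [dist_eq_norm] using hfloor
  · rw [← dist_eq_norm] at hk ⊢
    have hlo := hfloor x y
    have hhi := hf.ceil_dist_le_ceil_dist hSdense hg hgf x y
    rw [hk, Int.floor_natCast] at hlo
    rw [hk, Int.ceil_natCast] at hhi
    exact le_antisymm (by exact_mod_cast Int.ceil_le.1 hhi)
      (by exact_mod_cast Int.le_floor.1 hlo.le)

/-- Let `S` be a countable dense subset of a finite-dimensional
real normed space `V` and let `f` be a step-isometry on `S` (a bijection of `S`
preserving the integer parts of distances between points of `S`).  Then there is a
unique continuous function `g : V → V` agreeing with `f` on `S`; moreover `g` is a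
step-isometry of `V` and preserves integer distances. -/
theorem stepIsometry_extends
    {V : Type*} [NormedAddCommGroup V] [NormedSpace ℝ V] [FiniteDimensional ℝ V]
    (S : Set V) (hScount : S.Countable) (hSdense : Dense S)
    (f : V → V) (hbij : Set.BijOn f S S)
    (hstep : ∀ x ∈ S, ∀ y ∈ S, ⌊‖x - y‖⌋ = ⌊‖f x - f y‖⌋) :
    ∃ g : V → V,
      Continuous g ∧ Set.EqOn g f S ∧
      IsStepIsometry g ∧
      (∀ (k : ℕ) (x y : V), ‖x - y‖ = k → ‖g x - g y‖ = k) ∧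
      (∀ g' : V → V, Continuous g' → Set.EqOn g' f S → g' = g) :=
  stepIsometry_extends_general S hSdense f hbij hstep
end

section
/- Let V be a finite-dimensional real normed space and let f : V → V be a step-isometry. Then f preserves integer distances (for every k ∈ ℕ, ‖x − y‖ = k implies ‖f(x) − f(y)‖ = k), and for every k ∈ ℕ and x ∈ V the image of the closed ball B(x,k) under f is exactly the closed ball B(f(x),k). -/
section Floor

variable {α : Type*} [Ring α] [LinearOrder α] [FloorRing α] {a b : α} {z : ℤ}

lemma Int.cast_le_of_floor_eq (h : ⌊a⌋ = ⌊b⌋) (hz : (z : α) ≤ a) : (z : α) ≤ b :=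
  Int.le_floor.1 (h ▸ Int.le_floor.2 hz)

lemma Int.lt_cast_of_floor_eq (h : ⌊a⌋ = ⌊b⌋) (hz : a < z) : b < z :=
  Int.floor_lt.1 (h ▸ Int.floor_lt.2 hz)

end Floor

lemma exists_dist_eq_of_dist_le {E P : Type*} [NormedAddCommGroup E] [NormedSpace ℝ E]
    [MetricSpace P] [NormedAddTorsor E P] {x y : P} (hxy : x ≠ y) {r : ℝ}
    (hr : dist x y ≤ r) : ∃ z : P, dist x z = r ∧ dist y z = r - dist x y := by
  have hd : 0 < dist x y := dist_pos.2 hxy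
  have hc : 1 ≤ r / dist x y := (one_le_div hd).2 hr
  refine ⟨AffineMap.lineMap x y (r / dist x y), ?_, ?_⟩
  · rw [dist_comm, dist_lineMap_left, Real.norm_of_nonneg (by linarith),
      div_mul_cancel₀ _ hd.ne']
  · rw [dist_comm, dist_lineMap_right, Real.norm_of_nonpos (by linarith), neg_sub, sub_mul,
      div_mul_cancel₀ _ hd.ne', one_mul]

lemma dist_le_natCast_of_floor_dist_eq {E P W : Type*} [NormedAddCommGroup E] [NormedSpace ℝ E]
    [MetricSpace P] [NormedAddTorsor E P] [PseudoMetricSpace W] {f : P → W}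
    (hf : ∀ x y, ⌊dist x y⌋ = ⌊dist (f x) (f y)⌋) {k : ℕ} {x y : P}
    (h : dist (f x) (f y) ≤ k) : dist x y ≤ k := by
  by_contra! hk
  have hxy : x ≠ y := dist_pos.1 ((Nat.cast_nonneg k).trans_lt hk)
  have hlt : dist x y < k + 1 := by
    exact_mod_cast Int.lt_cast_of_floor_eq (hf x y).symm (z := k + 1) (by push_cast; linarith)
  obtain ⟨z, hxz, hyz⟩ := exists_dist_eq_of_dist_le hxy hlt.le
  have hfar : (k : ℝ) + 1 ≤ dist (f x) (f z) := by
    exact_mod_cast Int.cast_le_of_floor_eq (hf x z) (z := k + 1) (by push_cast; linarith)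
  have hnear : dist (f y) (f z) < 1 := by
    exact_mod_cast Int.lt_cast_of_floor_eq (hf y z) (z := 1) (by push_cast; linarith)
  linarith [dist_triangle (f x) (f y) (f z)]

namespace IsStepIsometry

variable {V : Type*} [NormedAddCommGroup V] {f : V → V}

lemma floor_dist_eq (hf : IsStepIsometry f) (x y : V) :
    ⌊dist x y⌋ = ⌊dist (f x) (f y)⌋ := by
  simpa only [dist_eq_norm] using hf.2 x y

lemma dist_le_natCast_iff [NormedSpace ℝ V] (hf : IsStepIsometry f) (k : ℕ) (x y : V) :
    dist (f x) (f y) ≤ k ↔ dist x y ≤ k := by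
  refine ⟨dist_le_natCast_of_floor_dist_eq hf.floor_dist_eq, fun h => ?_⟩
  set g := Function.surjInv hf.1.2
  have hfg : ∀ u, f (g u) = u := Function.rightInverse_surjInv hf.1.2
  have hgf : ∀ u, g (f u) = u := Function.leftInverse_surjInv hf.1
  have hg : ∀ u v, ⌊dist u v⌋ = ⌊dist (g u) (g v)⌋ := fun u v => by
    rw [hf.floor_dist_eq (g u), hfg, hfg]
  exact dist_le_natCast_of_floor_dist_eq hg (by rwa [hgf, hgf])

end IsStepIsometry

theorem stepIsometry_integer_distances_and_balls_general
    {V : Type*} [NormedAddCommGroup V] [NormedSpace ℝ V]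
    (f : V → V) (hf : IsStepIsometry f) :
    (∀ (k : ℕ) (x y : V), ‖x - y‖ = k → ‖f x - f y‖ = k) ∧
    (∀ (k : ℕ) (x : V), f '' Metric.closedBall x k = Metric.closedBall (f x) k) := by
  refine ⟨fun k x y h => ?_, fun k x => ?_⟩
  · rw [← dist_eq_norm] at h ⊢
    refine le_antisymm ((hf.dist_le_natCast_iff k x y).2 h.le) ?_
    exact_mod_cast Int.cast_le_of_floor_eq (hf.floor_dist_eq x y) (z := k) (by simp [h])
  · ext y
    obtain ⟨y, rfl⟩ := hf.1.2 y
    simp only [hf.1.1.mem_set_image, Metric.mem_closedBall, hf.dist_le_natCast_iff]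

/-- A step-isometry `f` of a finite-dimensional real normed
space preserves integer distances, and maps every closed ball of integer radius
`k` about `x` exactly onto the closed ball of radius `k` about `f x`. -/
theorem stepIsometry_integer_distances_and_balls
    {V : Type*} [NormedAddCommGroup V] [NormedSpace ℝ V] [FiniteDimensional ℝ V]
    (f : V → V) (hf : IsStepIsometry f) :
    (∀ (k : ℕ) (x y : V), ‖x - y‖ = k → ‖f x - f y‖ = k) ∧
    (∀ (k : ℕ) (x : V), f '' Metric.closedBall x k = Metric.closedBall (f x) k) :=
  stepIsometry_integer_distances_and_balls_general f hf
end

section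
/- Let V be a real normed space, let x be an extreme point of the closed unit ball B(0,1), and let n ∈ ℕ with n ≥ 1. Then B(0,1) ∩ B(nx, n−1) = {x}. -/
/-! If `y ∈ B(0,1)` and `‖n • x - y‖ ≤ n - 1` with `n ≥ 2`, then `z = (n - 1)⁻¹ • (n • x - y)`
also lies in `B(0,1)`, and `x = n⁻¹ • y + (1 - n⁻¹) • z` is a proper convex combination of
`y` and `z`; extremality of `x` forces `y = x`. -/

open Metric Set
open scoped Pointwise

theorem eq_of_mem_extremePoints_of_sub_smul_mem_smul {E : Type*} [AddCommGroup E] [Module ℝ E]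
    {A : Set E} {x y : E} {t : ℝ} (hx : x ∈ A.extremePoints ℝ) (hy : y ∈ A)
    (ht₀ : 0 < t) (ht₁ : t ≤ 1) (hxy : x - t • y ∈ (1 - t) • A) : y = x := by
  obtain ⟨z, hz, hxz : (1 - t) • z = x - t • y⟩ := hxy
  rcases ht₁.eq_or_lt with rfl | ht₁
  · simpa [sub_eq_zero, eq_comm] using hxz.symm
  have hseg : x ∈ openSegment ℝ y z :=
    ⟨t, 1 - t, ht₀, sub_pos.2 ht₁, add_sub_cancel t 1, by rw [hxz]; abel⟩
  exact hx.2 hy hz hseg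

theorem eq_of_mem_extremePoints_closedBall_of_norm_sub_smul_le {V : Type*}
    [NormedAddCommGroup V] [NormedSpace ℝ V] {x y : V} {t : ℝ}
    (hx : x ∈ (closedBall (0 : V) 1).extremePoints ℝ) (hy : ‖y‖ ≤ 1)
    (ht₀ : 0 < t) (ht₁ : t ≤ 1) (hxy : ‖x - t • y‖ ≤ 1 - t) : y = x := by
  refine eq_of_mem_extremePoints_of_sub_smul_mem_smul hx (by simpa using hy) ht₀ ht₁ ?_
  rw [smul_unitClosedBall_of_nonneg (sub_nonneg.2 ht₁)]
  simpa using hxy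

/-- If `x` is an extreme point of the closed unit ball of a real
normed space and `n ≥ 1`, then `B(0,1) ∩ B(n • x, n − 1) = {x}`. -/
theorem closedBall_inter_closedBall_extremePoint
    {V : Type*} [NormedAddCommGroup V] [NormedSpace ℝ V]
    (x : V) (hx : x ∈ Set.extremePoints ℝ (Metric.closedBall (0 : V) 1))
    (n : ℕ) (hn : 1 ≤ n) :
    Metric.closedBall (0 : V) 1 ∩ Metric.closedBall ((n : ℝ) • x) ((n : ℝ) - 1)
      = {x} := by
  have hn₁ : (1 : ℝ) ≤ n := by exact_mod_cast hn
  have hn₀ : (0 : ℝ) < n := by linarith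
  ext y
  rw [mem_inter_iff, mem_closedBall_zero_iff, mem_closedBall_iff_norm', mem_singleton_iff]
  constructor
  · rintro ⟨hy, hxy⟩
    refine eq_of_mem_extremePoints_closedBall_of_norm_sub_smul_le hx hy (inv_pos.2 hn₀)
      (inv_le_one_of_one_le₀ hn₁) ?_
    have hscale : x - (n : ℝ)⁻¹ • y = (n : ℝ)⁻¹ • ((n : ℝ) • x - y) := by
      rw [smul_sub, inv_smul_smul₀ hn₀.ne']
    calc ‖x - (n : ℝ)⁻¹ • y‖ = (n : ℝ)⁻¹ * ‖(n : ℝ) • x - y‖ := by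
          rw [hscale, norm_smul, norm_inv, Real.norm_natCast]
      _ ≤ (n : ℝ)⁻¹ * (n - 1) := by gcongr
      _ = 1 - (n : ℝ)⁻¹ := by field_simp
  · intro hyx
    have hx₁ : ‖x‖ ≤ 1 := by simpa using hx.1
    refine ⟨hyx ▸ hx₁, ?_⟩
    calc ‖(n : ℝ) • x - y‖ = ‖((n : ℝ) - 1) • x‖ := by rw [hyx, sub_smul, one_smul]
      _ = (n - 1) * ‖x‖ := by rw [norm_smul, Real.norm_of_nonneg (by linarith)]
      _ ≤ n - 1 := mul_le_of_le_one_right (by linarith) hx₁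
end

section
/- Let V be a real normed space and let x be a point of the closed unit ball B(0,1). Then x is an extreme point of B(0,1) if and only if there exists a point z ∈ V such that B(z,1) ∩ B(0,1) = {x}. -/
/-!
If `x` is an extreme point of the unit ball `B`, then `B(2x, 1) ∩ B = {x}`: a point `u` of this
intersection has its mirror image `2x - u` in `B`, and `x` is the midpoint of the two.
Conversely, the reflection `u ↦ z - u` maps `B(z, 1) ∩ B` onto itself, so if this intersection is
`{x}` then `z = 2x`, and any segment `[x - v, x + v] ⊆ B` has its endpoints in `B(2x, 1) ∩ B`,
forcing `v = 0`.
-/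

open Metric

theorem Convex.mem_extremePoints_iff_forall_add_mem_sub_mem {𝕜 E : Type*} [Field 𝕜]
    [LinearOrder 𝕜] [IsStrictOrderedRing 𝕜] [AddCommGroup E] [Module 𝕜 E] {A : Set E} {x : E}
    (hA : Convex 𝕜 A) :
    x ∈ A.extremePoints 𝕜 ↔ x ∈ A ∧ ∀ v, x + v ∈ A → x - v ∈ A → v = 0 := by
  constructor
  · rintro ⟨hxA, hext⟩
    refine ⟨hxA, fun v hadd hsub ↦ ?_⟩
    have := invertibleOfNonzero (two_ne_zero' 𝕜)
    simpa using hext hsub hadd (mem_openSegment_sub_add x v)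
  · rintro ⟨hxA, hcentral⟩
    refine ⟨hxA, fun y hy w hw ⟨a, b, ha, hb, hab, hx⟩ ↦ ?_⟩
    -- `x ± c (y - w)` still lies on the segment `[y, w]` when `c ≤ min a b`.
    set c := min a b
    have hc : 0 < c := lt_min ha hb
    have hadd : x + c • (y - w) ∈ A := by
      have hcomb : x + c • (y - w) = (a + c) • y + (b - c) • w := by rw [← hx]; module
      rw [hcomb]
      exact hA hy hw (by positivity) (sub_nonneg.2 (min_le_right a b)) (by linarith)
    have hsub : x - c • (y - w) ∈ A := by
      have hcomb : x - c • (y - w) = (a - c) • y + (b + c) • w := by rw [← hx]; module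
      rw [hcomb]
      exact hA hy hw (sub_nonneg.2 (min_le_left a b)) (by positivity) (by linarith)
    have hyw : y = w :=
      sub_eq_zero.1 ((smul_eq_zero.1 (hcentral _ hadd hsub)).resolve_left hc.ne')
    subst hyw
    rwa [← add_smul, hab, one_smul] at hx

section Seminormed

variable {V : Type*} [SeminormedAddCommGroup V]

theorem sub_mem_closedBall_inter_closedBall_zero {z u : V} {r : ℝ}
    (hu : u ∈ closedBall z r ∩ closedBall 0 r) : z - u ∈ closedBall z r ∩ closedBall 0 r := by
  rw [Set.mem_inter_iff, mem_closedBall_zero_iff, mem_closedBall_iff_norm] at hu ⊢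
  rw [sub_sub_cancel_left, norm_neg, norm_sub_rev]
  exact hu.symm

theorem eq_add_self_of_closedBall_inter_closedBall_zero_eq_singleton {z x : V} {r : ℝ}
    (h : closedBall z r ∩ closedBall 0 r = {x}) : z = x + x := by
  have hx : x ∈ closedBall z r ∩ closedBall 0 r := h ▸ Set.mem_singleton x
  have hzx : z - x = x := by
    simpa [h] using sub_mem_closedBall_inter_closedBall_zero hx
  exact sub_eq_iff_eq_add.1 hzx

theorem add_mem_closedBall_add_self_iff {x v : V} {r : ℝ} :
    x + v ∈ closedBall (x + x) r ↔ x - v ∈ closedBall 0 r := by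
  rw [mem_closedBall_iff_norm, mem_closedBall_zero_iff, add_sub_add_left_eq_sub, norm_sub_rev]

theorem closedBall_add_self_inter_closedBall_zero_eq_singleton_iff {x : V} {r : ℝ} :
    closedBall (x + x) r ∩ closedBall 0 r = {x} ↔
      x ∈ closedBall 0 r ∧ ∀ v, x + v ∈ closedBall 0 r → x - v ∈ closedBall 0 r → v = 0 := by
  constructor
  · intro h
    have hx : x ∈ closedBall (x + x) r ∩ closedBall 0 r := h ▸ Set.mem_singleton x
    refine ⟨hx.2, fun v hadd hsub ↦ ?_⟩
    have hmem : x + v ∈ closedBall (x + x) r ∩ closedBall 0 r :=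
      ⟨add_mem_closedBall_add_self_iff.2 hsub, hadd⟩
    simpa [h] using hmem
  · rintro ⟨hx, hcentral⟩
    refine Set.eq_singleton_iff_unique_mem.2 ⟨⟨?_, hx⟩, fun u ⟨hu2x, hu0⟩ ↦ ?_⟩
    · rw [mem_closedBall_iff_norm, sub_add_cancel_left, norm_neg]
      exact mem_closedBall_zero_iff.1 hx
    · rw [← add_sub_cancel x u] at hu2x hu0
      exact sub_eq_zero.1 (hcentral _ hu0 (add_mem_closedBall_add_self_iff.1 hu2x))

end Seminormed

theorem extremePoint_iff_unique_ball_intersection_general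
    {V : Type*} [NormedAddCommGroup V] [NormedSpace ℝ V]
    (x : V) :
    x ∈ Set.extremePoints ℝ (Metric.closedBall (0 : V) 1) ↔
      ∃ z : V, Metric.closedBall z 1 ∩ Metric.closedBall (0 : V) 1 = {x} := by
  rw [(convex_closedBall (0 : V) 1).mem_extremePoints_iff_forall_add_mem_sub_mem,
    ← closedBall_add_self_inter_closedBall_zero_eq_singleton_iff]
  refine ⟨fun h ↦ ⟨x + x, h⟩, ?_⟩
  rintro ⟨z, hz⟩
  rwa [← eq_add_self_of_closedBall_inter_closedBall_zero_eq_singleton hz]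

/-- A point `x` of the closed unit ball of a real normed space
is an extreme point if and only if there exists `z` with
`B(z,1) ∩ B(0,1) = {x}`. -/
theorem extremePoint_iff_unique_ball_intersection
    {V : Type*} [NormedAddCommGroup V] [NormedSpace ℝ V]
    (x : V) (hx : x ∈ Metric.closedBall (0 : V) 1) :
    x ∈ Set.extremePoints ℝ (Metric.closedBall (0 : V) 1) ↔
      ∃ z : V, Metric.closedBall z 1 ∩ Metric.closedBall (0 : V) 1 = {x} :=
  extremePoint_iff_unique_ball_intersection_general x
end

section
/- Let V be a finite-dimensional real normed space and let f : V → V be a step-isometry with f(0) = 0. Then f maps the set of extreme points of the closed unit ball B(0,1) into itself: if x is an extreme point of B(0,1), then so is f(x). -/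
open Metric Set

theorem Convex.mem_extremePoints_iff_forall_add_sub_mem {𝕜 E : Type*} [Field 𝕜] [LinearOrder 𝕜]
    [IsStrictOrderedRing 𝕜] [AddCommGroup E] [Module 𝕜 E] {A : Set E} (hA : Convex 𝕜 A) {x : E} :
    x ∈ A.extremePoints 𝕜 ↔ x ∈ A ∧ ∀ v, x + v ∈ A → x - v ∈ A → v = 0 := by
  refine ⟨fun hx ↦ ⟨hx.1, fun v hplus hminus ↦ ?_⟩, fun ⟨hxA, hx⟩ ↦ ⟨hxA, ?_⟩⟩
  · have hmid : x ∈ openSegment 𝕜 (x + v) (x - v) :=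
      ⟨2⁻¹, 2⁻¹, by norm_num, by norm_num, by norm_num, by module⟩
    simpa using hx.2 hplus hminus hmid
  · rintro y hy z hz ⟨a, b, ha, hb, hab, rfl⟩
    obtain ⟨hε, hεa, hεb⟩ : 0 < min a b ∧ min a b ≤ a ∧ min a b ≤ b :=
      ⟨lt_min ha hb, min_le_left a b, min_le_right a b⟩
    set ε := min a b
    have hplus : a • y + b • z + ε • (y - z) ∈ A := by
      convert hA hy hz (by linarith) (by linarith) (show (a + ε) + (b - ε) = 1 by linarith)
        using 1
      module
    have hminus : a • y + b • z - ε • (y - z) ∈ A := by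
      convert hA hy hz (by linarith) (by linarith) (show (a - ε) + (b + ε) = 1 by linarith)
        using 1
      module
    have hyz := hx _ hplus hminus
    rw [smul_eq_zero, sub_eq_zero] at hyz
    obtain rfl := hyz.resolve_left hε.ne'
    rw [← add_smul, hab, one_smul]

theorem mem_extremePoints_closedBall_iff_sphere_inter_sphere_subset {V : Type*}
    [NormedAddCommGroup V] [NormedSpace ℝ V] {x : V} {r : ℝ} (hx : ‖x‖ = r) :
    x ∈ (closedBall (0 : V) r).extremePoints ℝ ↔ sphere 0 r ∩ sphere ((2 : ℝ) • x) r ⊆ {x} := by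
  have hdist : ∀ v, dist (x + v) ((2 : ℝ) • x) = ‖x - v‖ := fun v ↦ by
    rw [dist_eq_norm, ← norm_neg]; congr 1; module
  rw [(convex_closedBall 0 r).mem_extremePoints_iff_forall_add_sub_mem]
  simp only [mem_closedBall_zero_iff, hx.le, true_and]
  constructor
  · rintro h u ⟨hu, hu2⟩
    rw [mem_sphere_zero_iff_norm] at hu
    rw [mem_sphere, ← add_sub_cancel x u, hdist] at hu2
    simpa [sub_eq_zero] using h (u - x) (by simp [hu]) hu2.le
  · intro h v hplus hminus
    have htri : 2 * r ≤ ‖x + v‖ + ‖x - v‖ := calc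
      2 * r = ‖(x + v) + (x - v)‖ := by
        rw [add_add_sub_cancel, ← two_smul ℝ x, norm_smul, hx, Real.norm_two]
      _ ≤ ‖x + v‖ + ‖x - v‖ := norm_add_le _ _
    have hmem : x + v ∈ sphere 0 r ∩ sphere ((2 : ℝ) • x) r :=
      ⟨mem_sphere_zero_iff_norm.2 (by linarith), by rw [mem_sphere, hdist]; linarith⟩
    simpa using h hmem

theorem norm_sub_eq_natCast_of_norm_map_sub_eq {V W : Type*} [NormedAddCommGroup V]
    [NormedSpace ℝ V] [SeminormedAddCommGroup W] {φ : V → W}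
    (hφ : ∀ x y, ⌊‖x - y‖⌋ = ⌊‖φ x - φ y‖⌋) {x y : V} {n : ℕ} (h : ‖φ x - φ y‖ = n) :
    ‖x - y‖ = n := by
  set d := ‖x - y‖
  have hfloor : ⌊d⌋ = n := by rw [hφ, h, Int.floor_natCast]
  have hnd : (n : ℝ) ≤ d := by exact_mod_cast Int.le_floor.1 hfloor.ge
  have hdn : d < n + 1 := by simpa [hfloor] using Int.lt_floor_add_one d
  refine le_antisymm (not_lt.1 fun hgt ↦ ?_) hnd
  have hd : 0 < d := (Nat.cast_nonneg n).trans_lt hgt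
  set e := d⁻¹ • (x - y)
  have he : ‖e‖ = 1 := by rw [norm_smul, norm_inv, norm_norm, inv_mul_cancel₀ hd.ne']
  have hx : x = y + d • e := by rw [smul_inv_smul₀ hd.ne', add_sub_cancel]
  -- the point on the ray from `y` through `x` at distance `n + 2` from `y`, within `2` of `x`
  set u := y + ((n : ℝ) + 2) • e
  have huy : ‖u - y‖ = n + 2 := by
    rw [add_sub_cancel_left, norm_smul, he, mul_one, Real.norm_of_nonneg (by positivity)]
  have hux : ‖u - x‖ = n + 2 - d := by
    rw [hx, show u - (y + d • e) = ((n : ℝ) + 2 - d) • e by module, norm_smul, he, mul_one,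
      Real.norm_of_nonneg (by linarith)]
  have hfar : (n : ℝ) + 2 ≤ ‖φ u - φ y‖ := by
    have : ((n + 2 : ℕ) : ℤ) ≤ ⌊‖φ u - φ y‖⌋ := by
      rw [← hφ, huy]; exact_mod_cast (Int.floor_natCast (n + 2)).ge
    exact_mod_cast Int.le_floor.1 this
  have hnear : ‖φ u - φ x‖ < 2 := by
    have : ⌊‖φ u - φ x‖⌋ < 2 := by rw [← hφ, hux]; exact Int.floor_lt.2 (by push_cast; linarith)
    exact_mod_cast Int.floor_lt.1 this
  linarith [norm_sub_le_norm_sub_add_norm_sub (φ u) (φ x) (φ y)]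

namespace IsStepIsometry

variable {V : Type*} [NormedAddCommGroup V] [NormedSpace ℝ V] {f : V → V}

theorem norm_map_sub_map_eq_natCast_iff (hf : IsStepIsometry f) {x y : V} {n : ℕ} :
    ‖f x - f y‖ = n ↔ ‖x - y‖ = n := by
  refine ⟨norm_sub_eq_natCast_of_norm_map_sub_eq hf.2, fun h ↦ ?_⟩
  let e := Equiv.ofBijective f hf.1
  have he : ∀ a b, ⌊‖a - b‖⌋ = ⌊‖e.symm a - e.symm b‖⌋ := fun a b ↦ by
    conv_lhs => rw [← e.apply_symm_apply a, ← e.apply_symm_apply b]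
    exact (hf.2 _ _).symm
  apply norm_sub_eq_natCast_of_norm_map_sub_eq he
  simpa [e] using h

theorem image_sphere (hf : IsStepIsometry f) (c : V) (n : ℕ) :
    f '' sphere c n = sphere (f c) n := by
  ext v
  obtain ⟨u, rfl⟩ := hf.1.2 v
  rw [hf.1.1.mem_set_image, mem_sphere_iff_norm, mem_sphere_iff_norm,
    hf.norm_map_sub_map_eq_natCast_iff]

end IsStepIsometry

theorem stepIsometry_maps_extremePoints_general
    {V : Type*} [NormedAddCommGroup V] [NormedSpace ℝ V]
    (f : V → V) (hf : IsStepIsometry f) (h0 : f 0 = 0)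
    (x : V) (hx : x ∈ Set.extremePoints ℝ (Metric.closedBall (0 : V) 1)) :
    f x ∈ Set.extremePoints ℝ (Metric.closedBall (0 : V) 1) := by
  rcases eq_or_ne x 0 with rfl | hx0
  · rwa [h0]
  have : Nontrivial V := nontrivial_of_ne x 0 hx0
  have hx1 : ‖x‖ = 1 := by simpa using extremePoints_closedBall_subset_sphere hx
  have hsphere : ∀ c : V, f '' sphere c 1 = sphere (f c) 1 := by
    simpa using fun c ↦ hf.image_sphere c 1
  have hP : sphere 0 1 ∩ sphere (f ((2 : ℝ) • x)) 1 ⊆ {f x} := by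
    rw [← h0, ← hsphere, ← hsphere, ← image_inter hf.1.1, ← image_singleton]
    exact image_mono ((mem_extremePoints_closedBall_iff_sphere_inter_sphere_subset hx1).1 hx)
  set w := f ((2 : ℝ) • x)
  have hw : ‖w‖ = 2 := by
    have := (hf.norm_map_sub_map_eq_natCast_iff (x := (2 : ℝ) • x) (y := 0) (n := 2)).2
      (by simp [norm_smul, hx1])
    simpa [h0] using this
  have hw2 : w = (2 : ℝ) • f x := by
    have hmid : (2⁻¹ : ℝ) • w ∈ sphere 0 1 ∩ sphere w 1 := by
      refine ⟨?_, ?_⟩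
      · simp [norm_smul, hw]
      · rw [mem_sphere_iff_norm, show (2⁻¹ : ℝ) • w - w = -((2⁻¹ : ℝ) • w) by module]
        simp [norm_smul, hw]
    rw [← hP hmid, smul_inv_smul₀ two_ne_zero]
  have hfx1 : ‖f x‖ = 1 := by
    rw [hw2, norm_smul, Real.norm_two] at hw; linarith
  rw [hw2] at hP
  exact (mem_extremePoints_closedBall_iff_sphere_inter_sphere_subset hfx1).2 hP

/-- A step-isometry of a finite-dimensional real normed space
fixing `0` maps extreme points of the closed unit ball to extreme points. -/
theorem stepIsometry_maps_extremePoints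
    {V : Type*} [NormedAddCommGroup V] [NormedSpace ℝ V] [FiniteDimensional ℝ V]
    (f : V → V) (hf : IsStepIsometry f) (h0 : f 0 = 0)
    (x : V) (hx : x ∈ Set.extremePoints ℝ (Metric.closedBall (0 : V) 1)) :
    f x ∈ Set.extremePoints ℝ (Metric.closedBall (0 : V) 1) :=
  stepIsometry_maps_extremePoints_general f hf h0 x hx
end

section
/- Let V be a finite-dimensional real normed space and let f : V → V be a step-isometry with f(0) = 0. Then f restricted to the extreme points of the closed unit ball B(0,1) is an isometry: for all extreme points x, y of B(0,1), ‖f(x) − f(y)‖ = ‖x − y‖. -/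
open Set Metric

section

variable {E : Type*} [NormedAddCommGroup E] [NormedSpace ℝ E]

theorem norm_sub_eq_natCast_of_floor_norm_sub_eq {F : Type*} [SeminormedAddCommGroup F]
    {φ : E → F} (hφ : ∀ x y, ⌊‖φ x - φ y‖⌋ = ⌊‖x - y‖⌋) {a b : E} {n : ℕ}
    (h : ‖φ a - φ b‖ = n) : ‖a - b‖ = n := by
  have hfloor : ⌊‖a - b‖⌋ = n := by rw [← hφ, h, Int.floor_natCast]
  refine le_antisymm (not_lt.1 fun hlt => ?_) (by exact_mod_cast Int.le_floor.1 hfloor.ge)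
  set β := dist a b
  have hβ : ‖a - b‖ = β := (dist_eq_norm a b).symm
  have hβn : β < n + 1 := by
    have := Int.lt_floor_add_one ‖a - b‖
    rw [hfloor, hβ] at this
    exact_mod_cast this
  have hβpos : 0 < β := hβ ▸ (Nat.cast_nonneg n).trans_lt hlt
  set p := AffineMap.lineMap a b ((n + 1) / β)
  have hpa : ‖p - a‖ = n + 1 := by
    rw [← dist_eq_norm, dist_lineMap_left, Real.norm_of_nonneg (by positivity),
      div_mul_cancel₀ _ hβpos.ne']
  have hpb : ‖p - b‖ = n + 1 - β := by
    rw [← dist_eq_norm, dist_lineMap_right, Real.norm_of_nonpos, neg_sub, sub_mul,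
      div_mul_cancel₀ _ hβpos.ne', one_mul]
    rw [sub_nonpos, le_div_iff₀ hβpos, one_mul]
    linarith
  have hφpa : (n : ℝ) + 1 ≤ ‖φ p - φ a‖ := by
    have : ⌊‖φ p - φ a‖⌋ = (n + 1 : ℕ) := by rw [hφ, hpa]; exact_mod_cast Int.floor_natCast (n + 1)
    exact_mod_cast Int.le_floor.1 this.ge
  have hφpb : ‖φ p - φ b‖ < 1 := by
    have : ⌊‖φ p - φ b‖⌋ = 0 := by
      rw [hφ, hpb, Int.floor_eq_zero_iff]
      constructor <;> linarith
    simpa using Int.floor_lt.1 (this.trans_lt zero_lt_one)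
  have := norm_sub_le_norm_sub_add_norm_sub (φ p) (φ b) (φ a)
  rw [norm_sub_rev (φ b), h] at this
  linarith

theorem eq_of_mem_extremePoints_closedBall_of_norm_smul_sub_le {x w : E}
    (hx : x ∈ extremePoints ℝ (closedBall (0 : E) 1)) {t : ℝ} (ht : 1 < t) (hw : ‖w‖ ≤ 1)
    (hwt : ‖t • x - w‖ ≤ t - 1) : w = x := by
  have ht0 : 0 < t := zero_lt_one.trans ht
  have ht1 : 0 < t - 1 := sub_pos.2 ht
  set b := (t - 1)⁻¹ • (t • x - w)
  have hb : ‖b‖ ≤ 1 := by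
    rw [norm_smul, Real.norm_of_nonneg (inv_nonneg.2 ht1.le)]
    exact inv_mul_le_one_of_le₀ hwt ht1.le
  have hseg : x ∈ openSegment ℝ w b := by
    refine ⟨t⁻¹, (t - 1) / t, by positivity, by positivity, by field_simp; ring, ?_⟩
    have : (t - 1) / t * (t - 1)⁻¹ = t⁻¹ := by field_simp
    rw [smul_smul, this, smul_sub, smul_smul, inv_mul_cancel₀ ht0.ne', one_smul, add_sub_cancel]
  exact hx.2 (mem_closedBall_zero_iff.2 hw) (mem_closedBall_zero_iff.2 hb) hseg

end

theorem eq_of_forall_floor_natCast_mul_eq {a b : ℝ} (h : ∀ n : ℕ, ⌊(n : ℝ) * a⌋ = ⌊(n : ℝ) * b⌋) :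
    a = b := by
  by_contra hne
  have hpos : 0 < |a - b| := abs_pos.2 (sub_ne_zero.2 hne)
  obtain ⟨n, hn⟩ := exists_nat_gt |a - b|⁻¹
  have hlt : (n : ℝ) * |a - b| < 1 := by
    simpa [← mul_sub, abs_mul] using Int.abs_sub_lt_one_of_floor_eq_floor (h n)
  rw [inv_lt_iff_one_lt_mul₀ hpos] at hn
  linarith

namespace IsStepIsometry

variable {V : Type*} [NormedAddCommGroup V] [NormedSpace ℝ V] {f : V → V}

theorem norm_sub_eq_natCast_iff (hf : IsStepIsometry f) {a b : V} {n : ℕ} :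
    ‖f a - f b‖ = n ↔ ‖a - b‖ = n := by
  refine ⟨norm_sub_eq_natCast_of_floor_norm_sub_eq fun x y => (hf.2 x y).symm, fun h => ?_⟩
  let e := Equiv.ofBijective f hf.1
  have he : ∀ x y, ⌊‖e.symm x - e.symm y‖⌋ = ⌊‖x - y‖⌋ := fun x y => by
    have hfe : ∀ z, f (e.symm z) = z := e.apply_symm_apply
    rw [hf.2, hfe, hfe]
  exact norm_sub_eq_natCast_of_floor_norm_sub_eq he (by simpa [e] using h)

theorem map_natCast_smul (hf : IsStepIsometry f) (h0 : f 0 = 0) {x : V}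
    (hx : x ∈ extremePoints ℝ (closedBall (0 : V) 1)) (hx1 : ‖x‖ = 1) (n : ℕ) :
    f ((n : ℝ) • x) = (n : ℝ) • f x := by
  induction n with
  | zero => simpa using h0
  | succ n ih =>
    rcases n.eq_zero_or_pos with rfl | hn
    · simp
    have ht : (1 : ℝ) < n + 1 := by
      have : (0 : ℝ) < n := by exact_mod_cast hn
      linarith
    rw [Nat.cast_succ]
    obtain ⟨w, hw⟩ := hf.1.2 (f (((n : ℝ) + 1) • x) - f ((n : ℝ) • x))
    have hw1 : ‖w‖ = 1 := by
      have hstep : ‖w - 0‖ = (1 : ℕ) := by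
        refine hf.norm_sub_eq_natCast_iff.1 ?_
        rw [hw, h0, sub_zero, hf.norm_sub_eq_natCast_iff]
        simp [add_smul, hx1]
      simpa using hstep
    have hwn : ‖((n : ℝ) + 1) • x - w‖ = n := by
      refine hf.norm_sub_eq_natCast_iff.1 ?_
      rw [hw, sub_sub_cancel, ← sub_zero (f _), ← h0, hf.norm_sub_eq_natCast_iff]
      simp [norm_smul, hx1]
    obtain rfl : w = x :=
      eq_of_mem_extremePoints_closedBall_of_norm_smul_sub_le hx ht hw1.le (by rw [hwn, add_sub_cancel_right])
    rw [add_smul _ _ (f w), one_smul, ← ih, hw, add_sub_cancel]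

end IsStepIsometry

theorem stepIsometry_isometry_on_extremePoints_general
    {V : Type*} [NormedAddCommGroup V] [NormedSpace ℝ V]
    (f : V → V) (hf : IsStepIsometry f) (h0 : f 0 = 0)
    (x y : V)
    (hx : x ∈ Set.extremePoints ℝ (Metric.closedBall (0 : V) 1))
    (hy : y ∈ Set.extremePoints ℝ (Metric.closedBall (0 : V) 1)) :
    ‖f x - f y‖ = ‖x - y‖ := by
  cases subsingleton_or_nontrivial V
  · simp [Subsingleton.elim x y]
  have hx1 : ‖x‖ = 1 := by simpa using extremePoints_closedBall_subset_sphere hx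
  have hy1 : ‖y‖ = 1 := by simpa using extremePoints_closedBall_subset_sphere hy
  refine (eq_of_forall_floor_natCast_mul_eq fun n => ?_).symm
  have := hf.2 ((n : ℝ) • x) ((n : ℝ) • y)
  rwa [hf.map_natCast_smul h0 hx hx1, hf.map_natCast_smul h0 hy hy1, ← smul_sub, ← smul_sub,
    norm_smul, norm_smul, Real.norm_natCast] at this

/-- A step-isometry of a finite-dimensional real normed space
fixing `0` restricts to an isometry on the extreme points of the closed unit
ball. -/
theorem stepIsometry_isometry_on_extremePoints
    {V : Type*} [NormedAddCommGroup V] [NormedSpace ℝ V] [FiniteDimensional ℝ V]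
    (f : V → V) (hf : IsStepIsometry f) (h0 : f 0 = 0)
    (x y : V)
    (hx : x ∈ Set.extremePoints ℝ (Metric.closedBall (0 : V) 1))
    (hy : y ∈ Set.extremePoints ℝ (Metric.closedBall (0 : V) 1)) :
    ‖f x - f y‖ = ‖x - y‖ :=
  stepIsometry_isometry_on_extremePoints_general f hf h0 x y hx hy
end

section
/- Let V be a real normed space with closed unit ball B = B(0,1), and suppose the segment [x,y] (the set of convex combinations of x and y) is an extreme line of B, i.e., [x,y] ⊆ B and whenever a point of [x,y] is a convex combination of points s, t ∈ B, then s, t ∈ [x,y]. Then [x,y] = B(0,1) ∩ B(x + y, 1). -/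
/-- The segment `[x,y]` is an extreme line of the convex body `A`: it is contained
in `A`, and whenever a point of `[x,y]` is a convex combination of `s, t ∈ A`,
both `s` and `t` lie in `[x,y]`. -/
def IsExtremeLine {V : Type*} [NormedAddCommGroup V] [NormedSpace ℝ V]
    (A : Set V) (x y : V) : Prop :=
  segment ℝ x y ⊆ A ∧
    ∀ z ∈ segment ℝ x y, ∀ s ∈ A, ∀ t ∈ A,
      z ∈ segment ℝ s t → s ∈ segment ℝ x y ∧ t ∈ segment ℝ x y

/-!
The point reflection `w ↦ x + y - w` through the midpoint of `[x,y]` maps `[x,y]` onto itself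
and `B(0,1)` onto `B(x + y, 1)`, which gives `⊆`. Conversely, if `w` and `x + y - w` both lie
in `B(0,1)`, then the midpoint of `[x,y]` is also their midpoint, so extremality forces
`w ∈ [x,y]`.
-/

section Reflection

variable {𝕜 E : Type*} [Field 𝕜] [LinearOrder 𝕜] [IsStrictOrderedRing 𝕜]
  [AddCommGroup E] [Module 𝕜 E]

theorem add_sub_mem_segment {x y w : E} (hw : w ∈ segment 𝕜 x y) :
    x + y - w ∈ segment 𝕜 x y := by
  obtain ⟨a, b, ha, hb, hab, rfl⟩ := hw
  refine ⟨b, a, hb, ha, by linarith, ?_⟩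
  obtain rfl : b = 1 - a := by linarith
  module

theorem midpoint_mem_segment_add_sub (x y w : E) :
    midpoint 𝕜 x y ∈ segment 𝕜 w (x + y - w) := by
  simpa [midpoint_eq_smul_add] using midpoint_mem_segment (𝕜 := 𝕜) w (x + y - w)

end Reflection

theorem IsExtremeLine.segment_eq {V : Type*} [NormedAddCommGroup V] [NormedSpace ℝ V]
    {A : Set V} {x y : V} (h : IsExtremeLine A x y) :
    segment ℝ x y = A ∩ (fun w ↦ x + y - w) ⁻¹' A := by
  ext w
  refine ⟨fun hw ↦ ⟨h.1 hw, h.1 (add_sub_mem_segment hw)⟩, fun ⟨hw, hw'⟩ ↦ ?_⟩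
  exact (h.2 _ (midpoint_mem_segment x y) w hw _ hw' (midpoint_mem_segment_add_sub x y w)).1

/-- If `[x,y]` is an extreme line of the closed unit ball of a
real normed space, then `[x,y] = B(0,1) ∩ B(x + y, 1)`. -/
theorem extremeLine_eq_ball_inter
    {V : Type*} [NormedAddCommGroup V] [NormedSpace ℝ V]
    (x y : V) (h : IsExtremeLine (Metric.closedBall (0 : V) 1) x y) :
    segment ℝ x y = Metric.closedBall (0 : V) 1 ∩ Metric.closedBall (x + y) 1 := by
  rw [h.segment_eq]
  congr 1
  ext w
  exact mem_closedBall_zero_iff.trans mem_closedBall_iff_norm'.symm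
end
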